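/- arXiv:1711.10480 — 4 statements merged into one kernel-verified Lean document; each statement's English description precedes it below -/
import Mathlib

section
/- Let p, q be nonnegative integers, let α_r > 0 (1 ≤ r ≤ p) and β_r > 0 (1 ≤ r ≤ q) be real, and let a_r, b_r be complex numbers such that α_r·n + a_r is never a nonpositive integer for any natural number n and any 1 ≤ r ≤ p. Set g(n) = ∏_{r=1}^p Γ(α_r n + a_r) / ∏_{r=1}^q Γ(β_r n + b_r) and κ = 1 + Σ_{r=1}^q β_r − Σ_{r=1}^p α_r. If κ > 0, then for every complex number z the series Σ_{n=0}^∞ g(n) z^n / n! converges absolutely. -/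
/-!
For `c > 0` the modulus of `Γ(c n + a)` is `n ^ (c n) e^{O(n)}`: writing `c n + a = w + m` with
`m ∈ ℕ` and `w` in the strip `1 ≤ re w ≤ 2` of height `im a`, the factor `|Γ w|` is bounded above
and below by compactness, and the Pochhammer factor `|w (w + 1) ⋯ (w + m - 1)|` lies between `m!`
and `(|w| + m) ^ m`, both `n ^ (c n) e^{O(n)}` since `m = c n + O(1)`. Multiplying these estimates
(and `n! = Γ(n + 1)`), the `n`-th term of the series is `n ^ (-κ n) e^{O(n)}`, hence eventually
below `e^{-n}`.
-/

open Filter Topology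

/-- The coefficient `g(n)` of the generalised Wright function
`ₚΨ_q(z) = Σ g(n) zⁿ/n!`. -/
noncomputable def wrightCoeff (p q : ℕ) (α : Fin p → ℝ) (a : Fin p → ℂ)
    (β : Fin q → ℝ) (b : Fin q → ℂ) (s : ℂ) : ℂ :=
  (∏ r, Complex.Gamma ((α r : ℂ) * s + a r)) /
    ∏ r, Complex.Gamma ((β r : ℂ) * s + b r)

open Real Set
open scoped Nat

lemma ascPochhammer_eval_eq_prod_range {R : Type*} [CommSemiring R] (n : ℕ) (r : R) :
    (ascPochhammer R n).eval r = ∏ k ∈ Finset.range n, (r + k) := by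
  induction n with
  | zero => simp
  | succ n ih => simp [ascPochhammer_succ_right, ih, Finset.prod_range_succ]

lemma exists_nat_sub_mem_Icc {x : ℝ} (hx : 1 ≤ x) : ∃ m : ℕ, x - m ∈ Icc 1 2 := by
  have h1 : 1 ≤ ⌊x⌋₊ := Nat.le_floor (by simpa using hx)
  refine ⟨⌊x⌋₊ - 1, ?_⟩
  rw [Nat.cast_sub h1, Nat.cast_one]
  constructor <;> linarith [Nat.floor_le (by linarith : 0 ≤ x), Nat.lt_floor_add_one x]

lemma exp_mul_log_sub_le_factorial (m : ℕ) : exp (m * log m - m) ≤ m ! := by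
  rcases m.eq_zero_or_pos with rfl | hm
  · simp
  have hpow : exp (m * log m) = (m : ℝ) ^ m := by
    rw [← log_pow, exp_log (by positivity)]
  have := Real.pow_div_factorial_le_exp m (Nat.cast_nonneg m) m
  rw [div_le_iff₀ (by positivity)] at this
  rw [exp_sub, hpow, div_le_iff₀ (exp_pos _)]
  linarith

lemma abs_mul_log_sub_mul_log_le {x y D : ℝ} (hx : 1 ≤ x) (hy : 0 < y) (hyx : |y - x| ≤ D) :
    |y * log y - x * log x| ≤ D * (D + 2) * x := by
  have hx0 : 0 < x := one_pos.trans_le hx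
  obtain ⟨hD₁, hD₂⟩ := abs_le.1 hyx
  have hD : 0 ≤ D := (abs_nonneg _).trans hyx
  have hlogx₀ : 0 ≤ log x := log_nonneg hx
  have hlogx₁ : log x ≤ x - 1 := log_le_sub_one_of_pos hx0
  have hyx' : x * (log y - log x) ≤ y - x :=
    calc x * (log y - log x) ≤ x * (y / x - 1) := by
          refine mul_le_mul_of_nonneg_left ?_ hx0.le
          rw [← log_div hy.ne' hx0.ne']
          exact log_le_sub_one_of_pos (div_pos hy hx0)
      _ = y - x := by field_simp
  have hxy' : y * (log x - log y) ≤ x - y :=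
    calc y * (log x - log y) ≤ y * (x / y - 1) := by
          refine mul_le_mul_of_nonneg_left ?_ hy.le
          rw [← log_div hx0.ne' hy.ne']
          exact log_le_sub_one_of_pos (div_pos hx0 hy)
      _ = x - y := by field_simp
  have hlog₁ : (x - y) * log x ≤ D * (x - 1) := mul_le_mul (by linarith) hlogx₁ hlogx₀ hD
  have hlog₂ : (y - x) * log x ≤ D * (x - 1) := mul_le_mul hD₂ hlogx₁ hlogx₀ hD
  rw [abs_le]
  constructor
  · nlinarith
  · have hquad : y * (log y - log x) ≤ (y - x) + (y - x) ^ 2 / x :=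
      calc y * (log y - log x) = y / x * (x * (log y - log x)) := by field_simp
        _ ≤ y / x * (y - x) := mul_le_mul_of_nonneg_left hyx' (div_pos hy hx0).le
        _ = (y - x) + (y - x) ^ 2 / x := by field_simp; ring
    have hsq : (y - x) ^ 2 / x ≤ D ^ 2 * x := by
      rw [div_le_iff₀ hx0]
      nlinarith [sq_abs (y - x), abs_nonneg (y - x), le_mul_of_one_le_right (sq_nonneg D) hx]
    linarith

lemma exists_abs_mul_log_sub_le {c : ℝ} (hc : 0 < c) (D : ℝ) :
    ∃ C, ∀ᶠ n : ℕ in atTop, ∀ y : ℝ, 0 < y → |y - c * n| ≤ D →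
      |y * log y - c * (n * log n)| ≤ C * n := by
  refine ⟨D * (D + 2) * c + |c * log c|, ?_⟩
  filter_upwards [(tendsto_natCast_atTop_atTop.const_mul_atTop hc).eventually_ge_atTop 1]
    with n hn y hy hyn
  have hn0 : (n : ℝ) ≠ 0 := (pos_of_mul_pos_right (one_pos.trans_le hn) hc.le).ne'
  have hscale : c * n * log (c * n) = c * (n * log n) + c * log c * n := by
    rw [log_mul hc.ne' hn0]; ring
  calc |y * log y - c * (n * log n)|
      = |(y * log y - c * n * log (c * n)) + c * log c * n| := by rw [hscale]; ring_nf
    _ ≤ |y * log y - c * n * log (c * n)| + |c * log c * n| := abs_add_le _ _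
    _ ≤ D * (D + 2) * (c * n) + |c * log c| * n := by
        gcongr
        · exact abs_mul_log_sub_mul_log_le hn hy hyn
        · rw [abs_mul, Nat.abs_cast]
    _ = (D * (D + 2) * c + |c * log c|) * n := by ring

namespace Complex

lemma norm_Gamma_add_nat {w : ℂ} (hw : 0 < w.re) (m : ℕ) :
    ‖Gamma (w + m)‖ = ‖Gamma w‖ * ∏ k ∈ Finset.range m, ‖w + k‖ := by
  have hw' : ∀ k : ℕ, w ≠ -k := fun k h => by
    simp only [h, neg_re, natCast_re, Left.neg_pos_iff] at hw
    linarith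
  rw [← norm_prod, ← norm_mul, ← ascPochhammer_eval_eq_prod_range,
    ← Gamma_add_nat_div_Gamma_eq w hw', mul_div_cancel₀ _ (Gamma_ne_zero_of_re_pos hw)]

lemma factorial_mul_norm_Gamma_le_norm_Gamma_add_nat {w : ℂ} (hw : 1 ≤ w.re) (m : ℕ) :
    m ! * ‖Gamma w‖ ≤ ‖Gamma (w + m)‖ := by
  rw [norm_Gamma_add_nat (one_pos.trans_le hw), mul_comm, ← Finset.prod_range_add_one_eq_factorial,
    Nat.cast_prod]
  refine mul_le_mul_of_nonneg_left (Finset.prod_le_prod (fun k _ => by positivity) fun k _ => ?_)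
    (norm_nonneg _)
  calc ((k + 1 : ℕ) : ℝ) ≤ (w + k).re := by push_cast; simp only [add_re, natCast_re]; linarith
    _ ≤ ‖w + k‖ := re_le_norm _

lemma norm_Gamma_add_nat_le {w : ℂ} (hw : 0 < w.re) (m : ℕ) :
    ‖Gamma (w + m)‖ ≤ ‖Gamma w‖ * (‖w‖ + m) ^ m := by
  rw [norm_Gamma_add_nat hw]
  refine mul_le_mul_of_nonneg_left ?_ (norm_nonneg _)
  calc ∏ k ∈ Finset.range m, ‖w + k‖ ≤ ∏ _k ∈ Finset.range m, (‖w‖ + m) := by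
        refine Finset.prod_le_prod (fun k _ => norm_nonneg _) fun k hk => ?_
        calc ‖w + k‖ ≤ ‖w‖ + k := by simpa using norm_add_le w k
          _ ≤ ‖w‖ + m := by gcongr; exact (Finset.mem_range.1 hk).le
    _ = (‖w‖ + m) ^ m := by rw [Finset.prod_const, Finset.card_range]

lemma exists_exp_neg_le_norm_Gamma_le_exp {K : Set ℂ} (hK : IsCompact K)
    (hre : ∀ s ∈ K, 0 < s.re) :
    ∃ C, ∀ s ∈ K, Real.exp (-C) ≤ ‖Gamma s‖ ∧ ‖Gamma s‖ ≤ Real.exp C := by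
  have hcont : ContinuousOn (fun s => Real.log ‖Gamma s‖) K := by
    refine ContinuousOn.log (f := fun s => ‖Gamma s‖) (fun s hs => ?_) fun s hs =>
      norm_ne_zero_iff.2 (Gamma_ne_zero_of_re_pos (hre s hs))
    refine (differentiableAt_Gamma s fun m h => ?_).continuousAt.norm.continuousWithinAt
    have := hre s hs
    simp only [h, neg_re, natCast_re, Left.neg_pos_iff] at this
    linarith
  obtain ⟨C, hC⟩ := hK.exists_bound_of_continuousOn hcont
  refine ⟨C, fun s hs => ?_⟩
  have hpos : 0 < ‖Gamma s‖ := norm_pos_iff.2 (Gamma_ne_zero_of_re_pos (hre s hs))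
  obtain ⟨h₁, h₂⟩ := abs_le.1 (by simpa only [Real.norm_eq_abs] using hC s hs)
  rw [← Real.exp_log hpos]
  exact ⟨Real.exp_le_exp.2 h₁, Real.exp_le_exp.2 h₂⟩

end Complex

lemma eventually_exists_nat_add_mem_strip {c : ℝ} (hc : 0 < c) (a : ℂ) :
    ∀ᶠ n : ℕ in atTop, ∃ m : ℕ, ∃ w ∈ Icc (1 : ℝ) 2 ×ℂ {a.im},
      (c : ℂ) * n + a = w + m ∧ |(m : ℝ) - c * n| ≤ |a.re| + 2 := by
  filter_upwards [(tendsto_atTop_add_const_right _ a.re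
    (tendsto_natCast_atTop_atTop.const_mul_atTop hc)).eventually_ge_atTop 1] with n hn
  obtain ⟨m, hm₁, hm₂⟩ := exists_nat_sub_mem_Icc hn
  refine ⟨m, c * n + a - m, ⟨⟨by simpa using hm₁, by simpa using hm₂⟩, by simp⟩, by ring, ?_⟩
  rw [abs_le]
  constructor <;> linarith [neg_abs_le a.re, le_abs_self a.re]

section Growth

variable {𝕜 : Type*} [NormedField 𝕜]

def GrowsAtMost (u : ℕ → 𝕜) (ρ : ℝ) : Prop :=
  ∃ C : ℝ, ∀ᶠ n : ℕ in atTop, ‖u n‖ ≤ exp (ρ * (n * log n) + C * n)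

def GrowsAtLeast (u : ℕ → 𝕜) (ρ : ℝ) : Prop :=
  ∃ C : ℝ, ∀ᶠ n : ℕ in atTop, exp (ρ * (n * log n) - C * n) ≤ ‖u n‖

variable {u v : ℕ → 𝕜} {ρ σ : ℝ}

lemma GrowsAtMost.mul (hu : GrowsAtMost u ρ) (hv : GrowsAtMost v σ) :
    GrowsAtMost (fun n => u n * v n) (ρ + σ) := by
  obtain ⟨C, hC⟩ := hu
  obtain ⟨C', hC'⟩ := hv
  refine ⟨C + C', ?_⟩
  filter_upwards [hC, hC'] with n hun hvn
  rw [norm_mul]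
  calc ‖u n‖ * ‖v n‖ ≤ exp (ρ * (n * log n) + C * n) * exp (σ * (n * log n) + C' * n) :=
        mul_le_mul hun hvn (norm_nonneg _) (exp_nonneg _)
    _ = exp ((ρ + σ) * (n * log n) + (C + C') * n) := by rw [← exp_add]; ring_nf

lemma GrowsAtLeast.mul (hu : GrowsAtLeast u ρ) (hv : GrowsAtLeast v σ) :
    GrowsAtLeast (fun n => u n * v n) (ρ + σ) := by
  obtain ⟨C, hC⟩ := hu
  obtain ⟨C', hC'⟩ := hv
  refine ⟨C + C', ?_⟩
  filter_upwards [hC, hC'] with n hun hvn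
  rw [norm_mul]
  calc exp ((ρ + σ) * (n * log n) - (C + C') * n)
      = exp (ρ * (n * log n) - C * n) * exp (σ * (n * log n) - C' * n) := by
        rw [← exp_add]; ring_nf
    _ ≤ ‖u n‖ * ‖v n‖ := mul_le_mul hun hvn (exp_nonneg _) (norm_nonneg _)

lemma GrowsAtLeast.inv (hu : GrowsAtLeast u ρ) : GrowsAtMost (fun n => (u n)⁻¹) (-ρ) := by
  obtain ⟨C, hC⟩ := hu
  refine ⟨C, ?_⟩
  filter_upwards [hC] with n hun
  rw [norm_inv]
  calc ‖u n‖⁻¹ ≤ (exp (ρ * (n * log n) - C * n))⁻¹ := inv_anti₀ (exp_pos _) hun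
    _ = exp (-ρ * (n * log n) + C * n) := by rw [← exp_neg]; ring_nf

lemma GrowsAtMost.div (hu : GrowsAtMost u ρ) (hv : GrowsAtLeast v σ) :
    GrowsAtMost (fun n => u n / v n) (ρ - σ) := by
  simpa only [div_eq_mul_inv, sub_eq_add_neg] using hu.mul hv.inv

lemma GrowsAtMost.prod {ι : Type*} (s : Finset ι) {u : ι → ℕ → 𝕜} {ρ : ι → ℝ}
    (hu : ∀ i ∈ s, GrowsAtMost (u i) (ρ i)) :
    GrowsAtMost (fun n => ∏ i ∈ s, u i n) (∑ i ∈ s, ρ i) := by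
  induction s using Finset.cons_induction with
  | empty => exact ⟨0, by simp⟩
  | cons i s hi ih =>
    simp only [Finset.prod_cons, Finset.sum_cons]
    exact (hu i (Finset.mem_cons_self i s)).mul (ih fun j hj => hu j (Finset.mem_cons_of_mem hj))

lemma GrowsAtLeast.prod {ι : Type*} (s : Finset ι) {u : ι → ℕ → 𝕜} {ρ : ι → ℝ}
    (hu : ∀ i ∈ s, GrowsAtLeast (u i) (ρ i)) :
    GrowsAtLeast (fun n => ∏ i ∈ s, u i n) (∑ i ∈ s, ρ i) := by
  induction s using Finset.cons_induction with
  | empty => exact ⟨0, by simp⟩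
  | cons i s hi ih =>
    simp only [Finset.prod_cons, Finset.sum_cons]
    exact (hu i (Finset.mem_cons_self i s)).mul (ih fun j hj => hu j (Finset.mem_cons_of_mem hj))

lemma growsAtMost_pow (z : 𝕜) : GrowsAtMost (fun n => z ^ n) 0 := by
  refine ⟨log (‖z‖ + 1), Eventually.of_forall fun n => ?_⟩
  rw [zero_mul, zero_add, exp_mul, exp_log (by positivity), norm_pow, rpow_natCast]
  exact pow_le_pow_left₀ (norm_nonneg z) (le_add_of_nonneg_right zero_le_one) n

lemma GrowsAtMost.summable_norm (hu : GrowsAtMost u ρ) (hρ : ρ < 0) :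
    Summable fun n => ‖u n‖ := by
  obtain ⟨C, hC⟩ := hu
  have hlog : ∀ᶠ n : ℕ in atTop, (C + 1) / -ρ ≤ log n :=
    (tendsto_log_atTop.comp tendsto_natCast_atTop_atTop).eventually_ge_atTop _
  refine Summable.of_norm_bounded_eventually_nat summable_exp_neg_nat ?_
  filter_upwards [hC, hlog] with n hun hlogn
  rw [norm_norm]
  refine hun.trans (exp_le_exp.2 ?_)
  rw [div_le_iff₀ (neg_pos.2 hρ)] at hlogn
  nlinarith [mul_le_mul_of_nonneg_left hlogn (Nat.cast_nonneg (α := ℝ) n)]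

end Growth

lemma Complex.growsAtMost_Gamma {c : ℝ} (hc : 0 < c) (a : ℂ) :
    GrowsAtMost (fun n : ℕ => Gamma (c * n + a)) c := by
  obtain ⟨K, hK⟩ := exists_exp_neg_le_norm_Gamma_le_exp (isCompact_Icc.reProdIm isCompact_singleton)
    fun w (hw : w ∈ Icc (1 : ℝ) 2 ×ℂ {a.im}) => one_pos.trans_le hw.1.1
  obtain ⟨C, hC⟩ := exists_abs_mul_log_sub_le hc (|a.re| + 2 + (2 + |a.im|))
  refine ⟨C + |K|, ?_⟩
  filter_upwards [eventually_exists_nat_add_mem_strip hc a, hC, eventually_ge_atTop 1]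
    with n ⟨m, w, hw, hsplit, hm⟩ hCn hn
  obtain ⟨⟨hw₁, hw₂⟩, hw_im : w.im = a.im⟩ := hw
  have hw_norm : ‖w‖ ≤ 2 + |a.im| := by
    have := norm_le_abs_re_add_abs_im w
    rw [abs_of_nonneg (by linarith), hw_im] at this
    linarith
  set y := ‖w‖ + m
  have hy : 1 ≤ y := by linarith [re_le_norm w, Nat.cast_nonneg (α := ℝ) m]
  have hyc : |y - c * n| ≤ |a.re| + 2 + (2 + |a.im|) := by
    calc |y - c * n| = |‖w‖ + (m - c * n)| := by simp only [y]; ring_nf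
      _ ≤ ‖w‖ + |(m : ℝ) - c * n| := by
          simpa only [abs_norm] using abs_add_le ‖w‖ ((m : ℝ) - c * n)
      _ ≤ _ := by linarith
  have hpow : y ^ m ≤ Real.exp (y * Real.log y) := by
    rw [← rpow_natCast, mul_comm, ← rpow_def_of_pos (by linarith)]
    exact rpow_le_rpow_of_exponent_le hy (by linarith [norm_nonneg w])
  have hn' : (1 : ℝ) ≤ n := by exact_mod_cast hn
  calc ‖Gamma (c * n + a)‖ = ‖Gamma (w + m)‖ := by rw [hsplit]
    _ ≤ ‖Gamma w‖ * y ^ m := norm_Gamma_add_nat_le (by linarith) m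
    _ ≤ Real.exp K * Real.exp (y * Real.log y) :=
        mul_le_mul (hK w ⟨⟨hw₁, hw₂⟩, hw_im⟩).2 hpow (by positivity) (Real.exp_nonneg _)
    _ ≤ Real.exp (c * (n * Real.log n) + (C + |K|) * n) := by
        rw [← Real.exp_add, Real.exp_le_exp]
        linarith [(abs_le.1 (hCn y (by linarith) hyc)).2, le_abs_self K,
          mul_le_mul_of_nonneg_left hn' (abs_nonneg K)]

lemma Complex.growsAtLeast_Gamma {c : ℝ} (hc : 0 < c) (a : ℂ) :
    GrowsAtLeast (fun n : ℕ => Gamma (c * n + a)) c := by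
  obtain ⟨K, hK⟩ := exists_exp_neg_le_norm_Gamma_le_exp (isCompact_Icc.reProdIm isCompact_singleton)
    fun w (hw : w ∈ Icc (1 : ℝ) 2 ×ℂ {a.im}) => one_pos.trans_le hw.1.1
  obtain ⟨C, hC⟩ := exists_abs_mul_log_sub_le hc (|a.re| + 2)
  refine ⟨C + c + (|a.re| + 2) + |K|, ?_⟩
  filter_upwards [eventually_exists_nat_add_mem_strip hc a, hC, eventually_ge_atTop 1,
    (tendsto_natCast_atTop_atTop.const_mul_atTop hc).eventually_gt_atTop (|a.re| + 2)]
    with n ⟨m, w, hw, hsplit, hm⟩ hCn hn hcn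
  have hn' : (1 : ℝ) ≤ n := by exact_mod_cast hn
  obtain ⟨hm₁, hm₂⟩ := abs_le.1 hm
  have hm_pos : (0 : ℝ) < m := by linarith
  calc Real.exp (c * (n * Real.log n) - (C + c + (|a.re| + 2) + |K|) * n)
      ≤ Real.exp (m * Real.log m - m) * Real.exp (-K) := by
        rw [← Real.exp_add, Real.exp_le_exp]
        have hD : (|a.re| + 2) * 1 ≤ (|a.re| + 2) * n :=
          mul_le_mul_of_nonneg_left hn' (by positivity)
        linarith [(abs_le.1 (hCn m hm_pos hm)).1, le_abs_self K,
          mul_le_mul_of_nonneg_left hn' (abs_nonneg K)]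
    _ ≤ m ! * ‖Gamma w‖ :=
        mul_le_mul (exp_mul_log_sub_le_factorial m) (hK w hw).1 (Real.exp_nonneg _) (by positivity)
    _ ≤ ‖Gamma (w + m)‖ := factorial_mul_norm_Gamma_le_norm_Gamma_add_nat hw.1.1 m
    _ = ‖Gamma (c * n + a)‖ := by rw [hsplit]

lemma growsAtLeast_factorial : GrowsAtLeast (fun n : ℕ => (n ! : ℂ)) 1 := by
  simpa [Complex.Gamma_nat_eq_factorial] using Complex.growsAtLeast_Gamma one_pos 1

theorem wright_summable_of_kappa_pos_general (p q : ℕ) (α : Fin p → ℝ) (a : Fin p → ℂ)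
    (β : Fin q → ℝ) (b : Fin q → ℂ)
    (hα : ∀ r, 0 < α r) (hβ : ∀ r, 0 < β r)
    (hκ : 0 < 1 + ∑ r, β r - ∑ r, α r) :
    ∀ z : ℂ, Summable (fun n : ℕ =>
      ‖wrightCoeff p q α a β b (n : ℂ) * z ^ n / (n.factorial : ℂ)‖) := by
  intro z
  have hcoeff : GrowsAtMost (fun n : ℕ => wrightCoeff p q α a β b n) (∑ r, α r - ∑ r, β r) :=
    (GrowsAtMost.prod _ fun r _ => Complex.growsAtMost_Gamma (hα r) (a r)).div
      (GrowsAtLeast.prod _ fun r _ => Complex.growsAtLeast_Gamma (hβ r) (b r))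
  exact ((hcoeff.mul (growsAtMost_pow z)).div growsAtLeast_factorial).summable_norm (by linarith)

/-- If `κ = 1 + Σ β_r − Σ α_r > 0`, the series defining the generalised Wright
function converges absolutely for every complex `z`. -/
theorem wright_summable_of_kappa_pos (p q : ℕ) (α : Fin p → ℝ) (a : Fin p → ℂ)
    (β : Fin q → ℝ) (b : Fin q → ℂ)
    (hα : ∀ r, 0 < α r) (hβ : ∀ r, 0 < β r)
    (ha : ∀ (n : ℕ) (r : Fin p) (m : ℕ), (α r : ℂ) * (n : ℂ) + a r ≠ -(m : ℂ))
    (hκ : 0 < 1 + ∑ r, β r - ∑ r, α r) :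
    ∀ z : ℂ, Summable (fun n : ℕ =>
      ‖wrightCoeff p q α a β b (n : ℂ) * z ^ n / (n.factorial : ℂ)‖) :=
  wright_summable_of_kappa_pos_general p q α a β b hα hβ hκ
end

section
/- Let p, q, α_r, β_r, a_r, b_r, g(n) and κ be as in the definition of the generalised Wright function, with α_r·n + a_r never a nonpositive integer, and let h = ∏_{r=1}^p α_r^{α_r} · ∏_{r=1}^q β_r^{−β_r}. If κ = 0, then the power series Σ_{n=0}^∞ g(n) z^n / n! has radius of convergence equal to h^{−1}: it converges absolutely for every complex z with |z| < h^{−1}, and diverges for every complex z with |z| > h^{−1}. -/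
open Filter Topology

lemma sum_inv_sq_le {x : ℝ} (hx : 1 < x) (m : ℕ) :
    ∑ j ∈ Finset.range m, ((x + j) ^ 2)⁻¹ ≤ (x - 1)⁻¹ := by
  have h0 : (0:ℝ) < x - 1 := by linarith
  have key : ∀ j ∈ Finset.range m, ((x + j)^2)⁻¹ ≤ (x - 1 + j)⁻¹ - (x - 1 + (j+1))⁻¹ := by
    intro j _
    have h1 : (0:ℝ) < x - 1 + j := by positivity
    have h2 : (0:ℝ) < x - 1 + (j+1) := by positivity
    have h3 : (0:ℝ) < x + j := by positivity
    have : (x - 1 + j)⁻¹ - (x - 1 + (j+1))⁻¹ = ((x-1+j) * (x-1+(j+1)))⁻¹ := by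
      field_simp
      ring
    rw [this]
    apply inv_anti₀ (by positivity)
    nlinarith
  calc ∑ j ∈ Finset.range m, ((x + j)^2)⁻¹
      ≤ ∑ j ∈ Finset.range m, ((x - 1 + j)⁻¹ - (x - 1 + (j+1:ℕ))⁻¹) := by
        apply Finset.sum_le_sum
        intro j hj
        have := key j hj
        push_cast
        push_cast at this
        linarith
    _ = (x - 1 + (0:ℕ))⁻¹ - (x - 1 + (m:ℕ))⁻¹ := by
        rw [Finset.sum_range_sub' (fun j : ℕ => (x - 1 + j)⁻¹)]
    _ ≤ (x - 1)⁻¹ := by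
        push_cast
        have : (0:ℝ) ≤ (x - 1 + m)⁻¹ := by positivity
        simp only [add_zero]
        linarith

lemma norm_gammaSeq_bounds {x y : ℝ} (hx : 1 < x) {n : ℕ} (hn : 1 ≤ n) :
    ‖Complex.GammaSeq (x + y * Complex.I) n‖ ≤ ‖Complex.GammaSeq (x : ℂ) n‖ ∧
    ‖Complex.GammaSeq (x : ℂ) n‖ ≤
      Real.exp (y ^ 2 / (2 * (x - 1))) * ‖Complex.GammaSeq (x + y * Complex.I) n‖ := by
  have hx0 : (0:ℝ) < x := by linarith
  have hn0 : (0:ℝ) < (n:ℝ) := by exact_mod_cast hn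
  set s : ℂ := x + y * Complex.I with hs
  have hre : s.re = x := by simp [hs]
  -- norms of the numerators agree
  have hnum : ‖(n:ℂ) ^ s‖ = ‖(n:ℂ) ^ (x:ℂ)‖ := by
    rw [← Complex.ofReal_natCast]
    rw [Complex.norm_cpow_eq_rpow_re_of_pos hn0, Complex.norm_cpow_eq_rpow_re_of_pos hn0, hre]
    simp
  -- factorwise bounds on the denominator
  have hfac : ∀ j : ℕ, x + j ≤ ‖s + j‖ ∧
      ‖s + j‖ ≤ (x + j) * Real.exp (y^2 / (x+j)^2 / 2) := by
    intro j
    have hxj : (0:ℝ) < x + j := by positivity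
    have hre2 : (s + j).re = x + j := by simp [hs]
    have him2 : (s + j).im = y := by simp [hs]
    have habs : ‖s + j‖ = Real.sqrt ((x+j)^2 + y^2) := by
      rw [Complex.norm_def, Complex.normSq_apply, hre2, him2]
      ring_nf
    constructor
    · rw [habs]
      have : x + j = Real.sqrt ((x+j)^2) := by rw [Real.sqrt_sq hxj.le]
      rw [this]
      apply Real.sqrt_le_sqrt
      nlinarith [sq_nonneg y, Real.sq_sqrt (by positivity : (0:ℝ) ≤ (x+j)^2)]
    · rw [habs]
      have h1 : (x+j)^2 + y^2 ≤ (x+j)^2 * Real.exp (y^2/(x+j)^2) := by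
        have := Real.add_one_le_exp (y^2/(x+j)^2)
        have h2 : (x+j)^2 * (y^2/(x+j)^2 + 1) ≤ (x+j)^2 * Real.exp (y^2/(x+j)^2) := by
          apply mul_le_mul_of_nonneg_left this (by positivity)
        calc (x+j)^2 + y^2 = (x+j)^2 * (y^2/(x+j)^2 + 1) := by field_simp; ring
          _ ≤ _ := h2
      calc Real.sqrt ((x+j)^2 + y^2) ≤ Real.sqrt ((x+j)^2 * Real.exp (y^2/(x+j)^2)) :=
            Real.sqrt_le_sqrt h1
        _ = (x+j) * Real.exp (y^2/(x+j)^2/2) := by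
            rw [Real.sqrt_mul (by positivity), Real.sqrt_sq hxj.le, ← Real.exp_half]
  set E : ℝ := Real.exp (y ^ 2 / (2 * (x - 1))) with hE
  have hE1 : (1:ℝ) ≤ E := by
    rw [hE]
    apply Real.one_le_exp
    apply div_nonneg (sq_nonneg y)
    linarith
  set P : ℝ := ∏ j ∈ Finset.range (n+1), ‖s + j‖ with hP
  set Q : ℝ := ∏ j ∈ Finset.range (n+1), (x + (j:ℝ)) with hQ
  have hQpos : 0 < Q := Finset.prod_pos (fun j _ => by positivity)
  have hQP : Q ≤ P := Finset.prod_le_prod (fun j _ => by positivity) (fun j _ => (hfac j).1)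
  have hPpos : 0 < P := lt_of_lt_of_le hQpos hQP
  have hPQE : P ≤ Q * E := by
    have h1 : P ≤ ∏ j ∈ Finset.range (n+1), ((x + j) * Real.exp (y^2/(x+j)^2/2)) :=
      Finset.prod_le_prod (fun j _ => norm_nonneg _) (fun j _ => (hfac j).2)
    have h2 : ∏ j ∈ Finset.range (n+1), ((x + (j:ℝ)) * Real.exp (y^2/(x+j)^2/2))
        = Q * Real.exp (∑ j ∈ Finset.range (n+1), y^2/(x+j)^2/2) := by
      rw [Finset.prod_mul_distrib, Real.exp_sum]
    have h3 : ∑ j ∈ Finset.range (n+1), y^2/(x+j)^2/2 ≤ y ^ 2 / (2 * (x - 1)) := by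
      have : ∑ j ∈ Finset.range (n+1), y^2/(x+j)^2/2
          = (y^2/2) * ∑ j ∈ Finset.range (n+1), ((x+(j:ℝ))^2)⁻¹ := by
        rw [Finset.mul_sum]
        apply Finset.sum_congr rfl
        intro j _
        field_simp
      rw [this]
      have h4 := sum_inv_sq_le hx (n+1)
      have h5 : (0:ℝ) ≤ y^2/2 := by positivity
      calc (y^2/2) * ∑ j ∈ Finset.range (n+1), ((x+(j:ℝ))^2)⁻¹
          ≤ (y^2/2) * (x-1)⁻¹ := mul_le_mul_of_nonneg_left h4 h5
        _ = y ^ 2 / (2 * (x - 1)) := by field_simp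
    calc P ≤ Q * Real.exp (∑ j ∈ Finset.range (n+1), y^2/(x+j)^2/2) := by rw [← h2]; exact h1
      _ ≤ Q * E := by
          apply mul_le_mul_of_nonneg_left _ hQpos.le
          exact Real.exp_le_exp.mpr h3
  -- compute the two norms
  have hnormS : ‖Complex.GammaSeq s n‖ = ‖(n:ℂ) ^ s‖ * (n.factorial : ℝ) / P := by
    rw [Complex.GammaSeq, norm_div, norm_mul, norm_prod]
    norm_num
    rfl
  have hnormX : ‖Complex.GammaSeq (x:ℂ) n‖ = ‖(n:ℂ) ^ (x:ℂ)‖ * (n.factorial : ℝ) / Q := by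
    rw [Complex.GammaSeq, norm_div, norm_mul, norm_prod]
    norm_num
    congr 1
    rw [hQ]
    apply Finset.prod_congr rfl
    intro j _
    have : (x:ℂ) + (j:ℂ) = ((x + (j:ℝ) : ℝ) : ℂ) := by push_cast; ring
    rw [this, Complex.norm_real, Real.norm_eq_abs]
    exact abs_of_pos (by positivity)
  have hNm : 0 < ‖(n:ℂ) ^ (x:ℂ)‖ * (n.factorial : ℝ) := by
    apply mul_pos _ (by exact_mod_cast n.factorial_pos)
    rw [← Complex.ofReal_natCast, Complex.norm_cpow_eq_rpow_re_of_pos hn0]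
    positivity
  constructor
  · rw [hnormS, hnormX, hnum]
    exact div_le_div_of_nonneg_left hNm.le hQpos hQP
  · rw [hnormS, hnormX, hnum, mul_div_assoc']
    rw [div_le_div_iff₀ hQpos hPpos]
    nlinarith [hNm, hPQE, hQpos]

lemma norm_gamma_bounds {x y : ℝ} (hx : 1 < x) :
    Real.exp (-(y ^ 2 / (2 * (x - 1)))) * Real.Gamma x ≤ ‖Complex.Gamma (x + y * Complex.I)‖ ∧
    ‖Complex.Gamma (x + y * Complex.I)‖ ≤ Real.Gamma x := by
  have hx0 : (0:ℝ) < x := by linarith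
  set s : ℂ := x + y * Complex.I with hs
  have hA : Tendsto (fun n => ‖Complex.GammaSeq (x:ℂ) n‖) atTop (𝓝 (Real.Gamma x)) := by
    have := (Complex.GammaSeq_tendsto_Gamma (x:ℂ)).norm
    rwa [Complex.Gamma_ofReal, Complex.norm_real, Real.norm_eq_abs,
      abs_of_pos (Real.Gamma_pos_of_pos hx0)] at this
  have hB : Tendsto (fun n => ‖Complex.GammaSeq s n‖) atTop (𝓝 ‖Complex.Gamma s‖) :=
    (Complex.GammaSeq_tendsto_Gamma s).norm
  constructor
  · have hup : Real.Gamma x ≤ Real.exp (y ^ 2 / (2 * (x - 1))) * ‖Complex.Gamma s‖ := by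
      refine le_of_tendsto_of_tendsto hA (hB.const_mul _) ?_
      filter_upwards [eventually_ge_atTop 1] with n hn
      exact (norm_gammaSeq_bounds hx hn).2
    rw [Real.exp_neg, inv_mul_le_iff₀ (Real.exp_pos _)]
    linarith
  · refine le_of_tendsto_of_tendsto hB hA ?_
    filter_upwards [eventually_ge_atTop 1] with n hn
    exact (norm_gammaSeq_bounds hx hn).1

lemma tendsto_xn_atTop {α : ℝ} (hα : 0 < α) (c : ℝ) :
    Tendsto (fun n : ℕ => α * n + c) atTop atTop := by
  apply tendsto_atTop_add_const_right
  exact (tendsto_natCast_atTop_atTop).const_mul_atTop hα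

lemma tendsto_norm_gamma_div (α c y : ℝ) (hα : 0 < α) :
    Tendsto (fun n : ℕ => ‖Complex.Gamma ((α * n + c : ℝ) + y * Complex.I)‖ /
      Real.Gamma (α * n + c)) atTop (𝓝 1) := by
  have hxtop := tendsto_xn_atTop hα c
  have hev : ∀ᶠ n : ℕ in atTop, 1 < α * n + c := hxtop.eventually (eventually_gt_atTop 1)
  have hlow : Tendsto (fun n : ℕ => Real.exp (-(y ^ 2 / (2 * (α * n + c - 1))))) atTop (𝓝 1) := by
    have h0 : Tendsto (fun n : ℕ => y ^ 2 / (2 * (α * n + c - 1))) atTop (𝓝 0) := by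
      apply Tendsto.div_atTop tendsto_const_nhds
      exact (tendsto_atTop_add_const_right _ (-1) hxtop).const_mul_atTop two_pos
        |>.congr (by intro n; ring)
    have h1 : Tendsto (fun n : ℕ => -(y ^ 2 / (2 * (α * n + c - 1)))) atTop (𝓝 0) := by
      simpa using h0.neg
    have := (Real.continuous_exp.tendsto 0).comp h1
    simpa [Function.comp_def] using this
  refine tendsto_of_tendsto_of_tendsto_of_le_of_le' hlow tendsto_const_nhds ?_ ?_
  · filter_upwards [hev] with n hn
    have hb := (norm_gamma_bounds (x := α * n + c) (y := y) hn).1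
    have hΓ : 0 < Real.Gamma (α * n + c) := Real.Gamma_pos_of_pos (by linarith)
    rw [le_div_iff₀ hΓ]
    exact hb
  · filter_upwards [hev] with n hn
    have hb := (norm_gamma_bounds (x := α * n + c) (y := y) hn).2
    have hΓ : 0 < Real.Gamma (α * n + c) := Real.Gamma_pos_of_pos (by linarith)
    rw [div_le_one hΓ]
    exact hb

lemma tendsto_add_div_self (c : ℝ) : Tendsto (fun x : ℝ => (x + c) / x) atTop (𝓝 1) := by
  have h : Tendsto (fun x : ℝ => 1 + c / x) atTop (𝓝 (1 + 0)) :=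
    tendsto_const_nhds.add (Tendsto.div_atTop tendsto_const_nhds tendsto_id)
  rw [add_zero] at h
  refine h.congr' ?_
  filter_upwards [eventually_gt_atTop 0] with x hx
  field_simp

lemma gamma_ratio_base {δ : ℝ} (hδ0 : 0 < δ) (hδ1 : δ < 1) :
    Tendsto (fun x : ℝ => Real.Gamma (x + δ) / (Real.Gamma x * x ^ δ)) atTop (𝓝 1) := by
  have hlow : Tendsto (fun x : ℝ => (x / (x + δ)) ^ (1 - δ)) atTop (𝓝 1) := by
    have h1 : Tendsto (fun x : ℝ => x / (x + δ)) atTop (𝓝 1) := by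
      have := tendsto_add_div_self δ
      have h2 : Tendsto (fun x : ℝ => ((x + δ) / x)⁻¹) atTop (𝓝 1⁻¹) := this.inv₀ one_ne_zero
      rw [inv_one] at h2
      refine h2.congr' ?_
      filter_upwards [eventually_gt_atTop 0] with x hx
      rw [inv_div]
    have := h1.rpow (tendsto_const_nhds (x := 1 - δ)) (Or.inl one_ne_zero)
    simpa using this
  refine tendsto_of_tendsto_of_tendsto_of_le_of_le' hlow tendsto_const_nhds ?_ ?_
  · filter_upwards [eventually_gt_atTop 0] with x hx
    -- lower bound : x * Γ x ≤ Γ (x+δ) * (x+δ)^(1-δ)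
    have key := Real.Gamma_mul_add_mul_le_rpow_Gamma_mul_rpow_Gamma
      (s := x + δ) (t := x + 1 + δ) (a := δ) (b := 1 - δ)
      (by positivity) (by positivity) hδ0 (by linarith) (by ring)
    have harg : δ * (x + δ) + (1 - δ) * (x + 1 + δ) = x + 1 := by ring
    rw [harg] at key
    have hG1 : Real.Gamma (x + 1) = x * Real.Gamma x := by
      rw [Real.Gamma_add_one hx.ne']
    have hG2 : Real.Gamma (x + 1 + δ) = (x + δ) * Real.Gamma (x + δ) := by
      have : x + 1 + δ = (x + δ) + 1 := by ring
      rw [this, Real.Gamma_add_one (by positivity)]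
    rw [hG1, hG2] at key
    have hΓx : 0 < Real.Gamma x := Real.Gamma_pos_of_pos hx
    have hΓxδ : 0 < Real.Gamma (x + δ) := Real.Gamma_pos_of_pos (by positivity)
    have key2 : x * Real.Gamma x ≤ Real.Gamma (x + δ) * (x + δ) ^ (1 - δ) := by
      have : Real.Gamma (x + δ) ^ δ * ((x + δ) * Real.Gamma (x + δ)) ^ (1 - δ)
          = Real.Gamma (x + δ) * (x + δ) ^ (1 - δ) := by
        rw [Real.mul_rpow (by positivity) hΓxδ.le, ← mul_assoc,
          mul_comm (Real.Gamma (x+δ) ^ δ) _, mul_assoc, ← Real.rpow_add hΓxδ]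
        norm_num
        ring
      rw [this] at key
      exact key
    -- turn into the ratio inequality
    have hxpow : (x:ℝ) = x ^ (1 - δ) * x ^ δ := by
      rw [← Real.rpow_add hx]
      norm_num
    have hdivpow : (x / (x + δ)) ^ (1 - δ) = x ^ (1-δ) / (x+δ) ^ (1-δ) :=
      Real.div_rpow hx.le (by positivity : (0:ℝ) ≤ x + δ) (1-δ)
    rw [hdivpow, div_le_div_iff₀ (by positivity) (by positivity)]
    have h6 : x ^ (1-δ) * (Real.Gamma x * x ^ δ) = x * Real.Gamma x := by
      linear_combination (-Real.Gamma x) * hxpow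
    rw [h6]
    exact key2
  · filter_upwards [eventually_gt_atTop 0] with x hx
    have key := Real.Gamma_mul_add_mul_le_rpow_Gamma_mul_rpow_Gamma
      (s := x) (t := x + 1) (a := 1 - δ) (b := δ)
      hx (by positivity) (by linarith) hδ0 (by ring)
    have harg : (1 - δ) * x + δ * (x + 1) = x + δ := by ring
    rw [harg, Real.Gamma_add_one hx.ne'] at key
    have hΓx : 0 < Real.Gamma x := Real.Gamma_pos_of_pos hx
    have : Real.Gamma x ^ (1 - δ) * (x * Real.Gamma x) ^ δ = Real.Gamma x * x ^ δ := by
      rw [Real.mul_rpow hx.le hΓx.le, ← mul_assoc, mul_comm (Real.Gamma x ^ (1-δ)) _,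
        mul_assoc, ← Real.rpow_add hΓx]
      norm_num
      ring
    rw [this] at key
    rw [div_le_one (by positivity)]
    exact key

lemma gamma_ratio_tendsto_one : ∀ δ : ℝ, 0 ≤ δ →
    Tendsto (fun x : ℝ => Real.Gamma (x + δ) / (Real.Gamma x * x ^ δ)) atTop (𝓝 1) := by
  have key : ∀ n : ℕ, ∀ δ : ℝ, 0 ≤ δ → δ ≤ n →
      Tendsto (fun x : ℝ => Real.Gamma (x + δ) / (Real.Gamma x * x ^ δ)) atTop (𝓝 1) := by
    intro n
    induction n with
    | zero =>
      intro δ h0 h1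
      have hδ : δ = 0 := le_antisymm (by exact_mod_cast h1) h0
      subst hδ
      refine (tendsto_const_nhds (x := (1:ℝ))).congr' ?_
      filter_upwards [eventually_gt_atTop 0] with x hx
      have hΓx : 0 < Real.Gamma x := Real.Gamma_pos_of_pos hx
      rw [add_zero, Real.rpow_zero, mul_one, div_self hΓx.ne']
    | succ n ih =>
      intro δ h0 h1
      rcases le_or_gt δ n with hc | hc
      · exact ih δ h0 hc
      rcases lt_or_ge δ 1 with hd | hd
      · rcases eq_or_lt_of_le h0 with he | he
        · subst he
          refine (tendsto_const_nhds (x := (1:ℝ))).congr' ?_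
          filter_upwards [eventually_gt_atTop 0] with x hx
          have hΓx : 0 < Real.Gamma x := Real.Gamma_pos_of_pos hx
          rw [add_zero, Real.rpow_zero, mul_one, div_self hΓx.ne']
        · exact gamma_ratio_base he hd
      · -- 1 ≤ δ, use the recurrence
        have ihprev := ih (δ - 1) (by linarith) (by push_cast at h1 ⊢; linarith)
        have hquot : Tendsto (fun x : ℝ => (x + (δ - 1)) / x) atTop (𝓝 1) :=
          tendsto_add_div_self (δ - 1)
        have := ihprev.mul hquot
        rw [mul_one] at this
        refine this.congr' ?_
        filter_upwards [eventually_gt_atTop 0] with x hx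
        have hΓx : 0 < Real.Gamma x := Real.Gamma_pos_of_pos hx
        have hG : Real.Gamma (x + δ) = (x + (δ - 1)) * Real.Gamma (x + (δ - 1)) := by
          have e : x + δ = (x + (δ - 1)) + 1 := by ring
          rw [e, Real.Gamma_add_one (by linarith : (0:ℝ) < x + (δ-1)).ne']
        have hpow : x ^ δ = x ^ (δ - 1) * x := by
          rw [← Real.rpow_add_one hx.ne' (δ - 1)]
          ring_nf
        rw [hG, hpow]
        have hx1 : (0:ℝ) < x + (δ - 1) := by linarith
        field_simp
  intro δ h0
  exact key ⌈δ⌉₊ δ h0 (Nat.le_ceil δ)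

lemma aux_alg {A B G1 G2 X N : ℝ} (hB : B ≠ 0) (hG1 : G1 ≠ 0) (hG2 : G2 ≠ 0)
    (hX : X ≠ 0) (hN : N ≠ 0) :
    A / G2 / (B / G1) * (G2 / (G1 * X)) * (X / N) = A / (B * N) := by
  field_simp

lemma factor_ratio {αr : ℝ} (hα : 0 < αr) (a : ℂ) :
    Tendsto (fun n : ℕ => ‖Complex.Gamma ((αr:ℂ) * ((n:ℂ)+1) + a)‖ /
      (‖Complex.Gamma ((αr:ℂ) * (n:ℂ) + a)‖ * (n:ℝ) ^ αr)) atTop (𝓝 (αr ^ αr)) := by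
  set c := a.re
  set y := a.im
  have hz : ∀ n : ℕ, (αr:ℂ) * (n:ℂ) + a = ((αr * n + c : ℝ):ℂ) + (y:ℂ) * Complex.I := by
    intro n
    apply Complex.ext <;> simp [c, y]
  have hz' : ∀ n : ℕ, (αr:ℂ) * ((n:ℂ)+1) + a
      = ((αr * n + (c + αr) : ℝ):ℂ) + (y:ℂ) * Complex.I := by
    intro n
    apply Complex.ext <;> simp [c, y] <;> ring
  have hu : Tendsto (fun n : ℕ => ‖Complex.Gamma ((αr * n + c : ℝ) + y * Complex.I)‖ /
      Real.Gamma (αr * n + c)) atTop (𝓝 1) := tendsto_norm_gamma_div αr c y hα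
  have hu' : Tendsto (fun n : ℕ => ‖Complex.Gamma ((αr * n + (c + αr) : ℝ) + y * Complex.I)‖ /
      Real.Gamma (αr * n + (c + αr))) atTop (𝓝 1) := tendsto_norm_gamma_div αr (c + αr) y hα
  have hG : Tendsto (fun n : ℕ => Real.Gamma ((αr * n + c) + αr) /
      (Real.Gamma (αr * n + c) * (αr * n + c) ^ αr)) atTop (𝓝 1) :=
    (gamma_ratio_tendsto_one αr hα.le).comp (tendsto_xn_atTop hα c)
  have hW : Tendsto (fun n : ℕ => ((αr * n + c) / n) ^ αr) atTop (𝓝 (αr ^ αr)) := by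
    have h1 : Tendsto (fun n : ℕ => (αr * n + c) / n) atTop (𝓝 αr) := by
      have h2 : Tendsto (fun n : ℕ => αr + c / n) atTop (𝓝 (αr + 0)) :=
        tendsto_const_nhds.add (tendsto_const_div_atTop_nhds_zero_nat c)
      rw [add_zero] at h2
      refine h2.congr' ?_
      filter_upwards [eventually_gt_atTop 0] with n hn
      have : (0:ℝ) < n := by exact_mod_cast hn
      field_simp
    exact h1.rpow tendsto_const_nhds (Or.inl hα.ne')
  have comb := ((hu'.div hu one_ne_zero).mul hG).mul hW
  rw [show (1:ℝ)/1*1*(αr^αr) = αr^αr by norm_num] at comb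
  refine comb.congr' ?_
  have hev : ∀ᶠ n : ℕ in atTop, 1 < αr * n + c :=
    (tendsto_xn_atTop hα c).eventually (eventually_gt_atTop 1)
  filter_upwards [hev, eventually_gt_atTop 0] with n hn hn0
  have hxn : (0:ℝ) < αr * n + c := by linarith
  have hn0' : (0:ℝ) < n := by exact_mod_cast hn0
  have hG1 : 0 < Real.Gamma (αr * n + c) := Real.Gamma_pos_of_pos hxn
  have hG2 : 0 < Real.Gamma (αr * n + (c + αr)) := Real.Gamma_pos_of_pos (by linarith)
  have hA : 0 < ‖Complex.Gamma ((αr * n + (c + αr) : ℝ) + y * Complex.I)‖ := by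
    rw [norm_pos_iff]
    apply Complex.Gamma_ne_zero_of_re_pos
    simp [Complex.add_re]
    linarith
  have hB : 0 < ‖Complex.Gamma ((αr * n + c : ℝ) + y * Complex.I)‖ := by
    rw [norm_pos_iff]
    apply Complex.Gamma_ne_zero_of_re_pos
    simp [Complex.add_re]
    linarith
  have hdiv : ((αr * n + c) / n) ^ αr = (αr * n + c) ^ αr / (n:ℝ) ^ αr :=
    Real.div_rpow hxn.le hn0'.le αr
  have hshift : Real.Gamma ((αr * n + c) + αr) = Real.Gamma (αr * n + (c + αr)) := by
    ring_nf
  have hp1 : (0:ℝ) < (αr * n + c) ^ αr := Real.rpow_pos_of_pos hxn αr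
  have hp2 : (0:ℝ) < (n:ℝ) ^ αr := Real.rpow_pos_of_pos hn0' αr
  rw [hz n, hz' n, hdiv, hshift]
  exact aux_alg hB.ne' hG1.ne' hG2.ne' hp1.ne' hp2.ne'

lemma norm_gamma_factor_pos {z : ℂ} (hre : 0 < z.re) : 0 < ‖Complex.Gamma z‖ := by
  rw [norm_pos_iff]
  exact Complex.Gamma_ne_zero_of_re_pos hre

lemma rpow_sum_eq {x : ℝ} (hx : 0 < x) {ι : Type*} (s : Finset ι) (f : ι → ℝ) :
    x ^ (∑ r ∈ s, f r) = ∏ r ∈ s, x ^ f r := by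
  classical
  induction s using Finset.induction with
  | empty => simp
  | insert _ _ hne ih => rw [Finset.sum_insert hne, Finset.prod_insert hne, Real.rpow_add hx, ih]

lemma aux_alg2 {P P' Q Q' NB NN : ℝ} (hP : P ≠ 0) (hQ : Q ≠ 0) (hQ' : Q' ≠ 0)
    (hNB : NB ≠ 0) (hNN : NN ≠ 0) (hN1 : NN + 1 ≠ 0) :
    (P' / (P * (NN * NB))) * (Q * NB / Q') * (NN / (NN + 1)) = (P' / Q') / ((P / Q) * (NN + 1)) := by
  field_simp

lemma main_ratio (p q : ℕ) (α : Fin p → ℝ) (a : Fin p → ℂ)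
    (β : Fin q → ℝ) (b : Fin q → ℂ)
    (hα : ∀ r, 0 < α r) (hβ : ∀ r, 0 < β r)
    (hκ : ∑ r, α r = 1 + ∑ r, β r) :
    Tendsto (fun n : ℕ => ‖wrightCoeff p q α a β b ((n:ℂ)+1)‖ /
      (‖wrightCoeff p q α a β b (n:ℂ)‖ * ((n:ℝ)+1))) atTop
      (𝓝 ((∏ r, (α r) ^ (α r)) * ∏ r, ((β r) ^ (β r))⁻¹)) := by
  classical
  have hA : Tendsto (fun n : ℕ => ∏ r : Fin p,
      (‖Complex.Gamma ((α r:ℂ) * ((n:ℂ)+1) + a r)‖ /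
        (‖Complex.Gamma ((α r:ℂ) * (n:ℂ) + a r)‖ * (n:ℝ) ^ (α r)))) atTop
      (𝓝 (∏ r, (α r) ^ (α r))) :=
    tendsto_finset_prod _ (fun r _ => factor_ratio (hα r) (a r))
  have hB : Tendsto (fun n : ℕ => ∏ r : Fin q,
      (‖Complex.Gamma ((β r:ℂ) * ((n:ℂ)+1) + b r)‖ /
        (‖Complex.Gamma ((β r:ℂ) * (n:ℂ) + b r)‖ * (n:ℝ) ^ (β r)))⁻¹) atTop
      (𝓝 (∏ r, ((β r) ^ (β r))⁻¹)) :=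
    tendsto_finset_prod _ (fun r _ =>
      (factor_ratio (hβ r) (b r)).inv₀ (Real.rpow_pos_of_pos (hβ r) (β r)).ne')
  have hC : Tendsto (fun n : ℕ => (n:ℝ) / ((n:ℝ)+1)) atTop (𝓝 1) := by
    have h1 := tendsto_natCast_atTop_atTop (R := ℝ)
    have := (tendsto_add_div_self 1).comp h1
    have h2 : Tendsto (fun n : ℕ => (((n:ℝ)+1) / (n:ℝ))⁻¹) atTop (𝓝 1⁻¹) :=
      (this.congr (fun n => rfl)).inv₀ one_ne_zero
    rw [inv_one] at h2
    refine h2.congr' ?_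
    filter_upwards [eventually_gt_atTop 0] with n hn
    have hn' : (0:ℝ) < n := by exact_mod_cast hn
    rw [inv_div]
  have comb := (hA.mul hB).mul hC
  rw [mul_one] at comb
  refine comb.congr' ?_
  have hevp : ∀ᶠ n : ℕ in atTop, ∀ r : Fin p, 0 < α r * n + (a r).re := by
    rw [eventually_all]
    intro r
    exact (tendsto_xn_atTop (hα r) _).eventually (eventually_gt_atTop 0)
  have hevq : ∀ᶠ n : ℕ in atTop, ∀ r : Fin q, 0 < β r * n + (b r).re := by
    rw [eventually_all]
    intro r
    exact (tendsto_xn_atTop (hβ r) _).eventually (eventually_gt_atTop 0)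
  filter_upwards [hevp, hevq, eventually_gt_atTop 0] with n hp' hq' hn0
  have hn0' : (0:ℝ) < n := by exact_mod_cast hn0
  have hrep : ∀ r : Fin p, ((α r:ℂ) * (n:ℂ) + a r).re = α r * n + (a r).re := by
    intro r; simp
  have hrep' : ∀ r : Fin p, ((α r:ℂ) * ((n:ℂ)+1) + a r).re = α r * (n+1) + (a r).re := by
    intro r; simp
  have hreq : ∀ r : Fin q, ((β r:ℂ) * (n:ℂ) + b r).re = β r * n + (b r).re := by
    intro r; simp
  have hreq' : ∀ r : Fin q, ((β r:ℂ) * ((n:ℂ)+1) + b r).re = β r * (n+1) + (b r).re := by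
    intro r; simp
  set P : ℝ := ∏ r : Fin p, ‖Complex.Gamma ((α r:ℂ) * (n:ℂ) + a r)‖ with hP
  set P' : ℝ := ∏ r : Fin p, ‖Complex.Gamma ((α r:ℂ) * ((n:ℂ)+1) + a r)‖ with hP'
  set Q : ℝ := ∏ r : Fin q, ‖Complex.Gamma ((β r:ℂ) * (n:ℂ) + b r)‖ with hQ
  set Q' : ℝ := ∏ r : Fin q, ‖Complex.Gamma ((β r:ℂ) * ((n:ℂ)+1) + b r)‖ with hQ'
  have hPpos : 0 < P := Finset.prod_pos (fun r _ => norm_gamma_factor_pos (by rw [hrep r]; exact hp' r))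
  have hP'pos : 0 < P' := Finset.prod_pos (fun r _ => norm_gamma_factor_pos (by
    rw [hrep' r]; have := hp' r; have := (hα r).le; nlinarith))
  have hQpos : 0 < Q := Finset.prod_pos (fun r _ => norm_gamma_factor_pos (by rw [hreq r]; exact hq' r))
  have hQ'pos : 0 < Q' := Finset.prod_pos (fun r _ => norm_gamma_factor_pos (by
    rw [hreq' r]; have := hq' r; have := (hβ r).le; nlinarith))
  have hwc : ‖wrightCoeff p q α a β b (n:ℂ)‖ = P / Q := by
    rw [wrightCoeff, norm_div, norm_prod, norm_prod]
  have hwc' : ‖wrightCoeff p q α a β b ((n:ℂ)+1)‖ = P' / Q' := by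
    rw [wrightCoeff, norm_div, norm_prod, norm_prod]
  -- rewrite the products of ratios
  have hprodA : ∏ r : Fin p,
      (‖Complex.Gamma ((α r:ℂ) * ((n:ℂ)+1) + a r)‖ /
        (‖Complex.Gamma ((α r:ℂ) * (n:ℂ) + a r)‖ * (n:ℝ) ^ (α r)))
      = P' / (P * (n:ℝ) ^ (∑ r, α r)) := by
    rw [Finset.prod_div_distrib, Finset.prod_mul_distrib, ← rpow_sum_eq hn0', ← hP, ← hP']
  have hprodB : ∏ r : Fin q,
      (‖Complex.Gamma ((β r:ℂ) * ((n:ℂ)+1) + b r)‖ /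
        (‖Complex.Gamma ((β r:ℂ) * (n:ℂ) + b r)‖ * (n:ℝ) ^ (β r)))⁻¹
      = Q * (n:ℝ) ^ (∑ r, β r) / Q' := by
    rw [Finset.prod_inv_distrib, Finset.prod_div_distrib, Finset.prod_mul_distrib,
      ← rpow_sum_eq hn0', ← hQ, ← hQ', inv_div]
  rw [hprodA, hprodB, hwc, hwc']
  have hsplit : (n:ℝ) ^ (∑ r, α r) = (n:ℝ) * (n:ℝ) ^ (∑ r, β r) := by
    rw [hκ, Real.rpow_add hn0', Real.rpow_one]
  rw [hsplit]
  have hNB : ((n:ℝ) ^ (∑ r, β r)) ≠ 0 := (Real.rpow_pos_of_pos hn0' _).ne'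
  exact aux_alg2 hPpos.ne' hQpos.ne' hQ'pos.ne' hNB hn0'.ne' (by positivity)

lemma aux_alg3 {A A' Zp Z F NN : ℝ} (hA : A ≠ 0) (hF : F ≠ 0) (hN1 : NN + 1 ≠ 0) :
    A' * (Zp * Z) / ((NN + 1) * F) = A' / (A * (NN + 1)) * Z * (A * Zp / F) := by
  field_simp

lemma wc_norm_pos (p q : ℕ) (α : Fin p → ℝ) (a : Fin p → ℂ)
    (β : Fin q → ℝ) (b : Fin q → ℂ)
    (hα : ∀ r, 0 < α r) (hβ : ∀ r, 0 < β r) :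
    ∀ᶠ n : ℕ in atTop, 0 < ‖wrightCoeff p q α a β b (n:ℂ)‖ := by
  have hevp : ∀ᶠ n : ℕ in atTop, ∀ r : Fin p, 0 < α r * n + (a r).re := by
    rw [eventually_all]
    intro r
    exact (tendsto_xn_atTop (hα r) _).eventually (eventually_gt_atTop 0)
  have hevq : ∀ᶠ n : ℕ in atTop, ∀ r : Fin q, 0 < β r * n + (b r).re := by
    rw [eventually_all]
    intro r
    exact (tendsto_xn_atTop (hβ r) _).eventually (eventually_gt_atTop 0)
  filter_upwards [hevp, hevq] with n hp' hq'
  rw [wrightCoeff, norm_div, norm_prod, norm_prod]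
  apply div_pos
  · exact Finset.prod_pos (fun r _ => norm_gamma_factor_pos (by simpa using hp' r))
  · exact Finset.prod_pos (fun r _ => norm_gamma_factor_pos (by simpa using hq' r))

/-- If `κ = 1 + Σ β_r − Σ α_r = 0`, the power series defining the generalised
Wright function has radius of convergence `h⁻¹`, where
`h = ∏ α_r^{α_r} ∏ β_r^{−β_r}`: it converges absolutely for `‖z‖ < h⁻¹` and
diverges for `‖z‖ > h⁻¹`. -/
theorem wright_radius_of_kappa_zero (p q : ℕ) (α : Fin p → ℝ) (a : Fin p → ℂ)
    (β : Fin q → ℝ) (b : Fin q → ℂ)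
    (hα : ∀ r, 0 < α r) (hβ : ∀ r, 0 < β r)
    (ha : ∀ (n : ℕ) (r : Fin p) (m : ℕ), (α r : ℂ) * (n : ℂ) + a r ≠ -(m : ℂ))
    (hκ : 1 + ∑ r, β r - ∑ r, α r = 0)
    (h : ℝ) (hh : h = (∏ r, (α r) ^ (α r)) * ∏ r, (β r) ^ (-(β r))) :
    (∀ z : ℂ, ‖z‖ < h⁻¹ → Summable (fun n : ℕ =>
      ‖wrightCoeff p q α a β b (n : ℂ) * z ^ n / (n.factorial : ℂ)‖)) ∧
    (∀ z : ℂ, h⁻¹ < ‖z‖ → ¬ ∃ L : ℂ, Tendsto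
      (fun N : ℕ => ∑ n ∈ Finset.range N,
        wrightCoeff p q α a β b (n : ℂ) * z ^ n / (n.factorial : ℂ))
      atTop (𝓝 L)) := by
  have hκ' : ∑ r, α r = 1 + ∑ r, β r := by linarith
  have hhval : h = (∏ r, (α r) ^ (α r)) * ∏ r, ((β r) ^ (β r))⁻¹ := by
    rw [hh]
    congr 1
    exact Finset.prod_congr rfl (fun r _ => Real.rpow_neg (hβ r).le (β r))
  have hpos : 0 < h := by
    rw [hhval]
    exact mul_pos (Finset.prod_pos (fun r _ => Real.rpow_pos_of_pos (hα r) _))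
      (Finset.prod_pos (fun r _ => inv_pos.mpr (Real.rpow_pos_of_pos (hβ r) _)))
  have hratio : Tendsto (fun n : ℕ => ‖wrightCoeff p q α a β b ((n:ℂ)+1)‖ /
      (‖wrightCoeff p q α a β b (n:ℂ)‖ * ((n:ℝ)+1))) atTop (𝓝 h) := by
    rw [hhval]
    exact main_ratio p q α a β b hα hβ hκ'
  set ρ : ℕ → ℝ := fun n => ‖wrightCoeff p q α a β b ((n:ℂ)+1)‖ /
      (‖wrightCoeff p q α a β b (n:ℂ)‖ * ((n:ℝ)+1)) with hρ
  have key : ∀ z : ℂ, ∀ᶠ n : ℕ in atTop,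
      ‖wrightCoeff p q α a β b ((n+1 : ℕ) : ℂ) * z ^ (n+1) / ((n+1).factorial : ℂ)‖
        = (ρ n * ‖z‖) * ‖wrightCoeff p q α a β b (n : ℂ) * z ^ n / (n.factorial : ℂ)‖ := by
    intro z
    filter_upwards [wc_norm_pos p q α a β b hα hβ] with n hW
    have hcast : ((n+1 : ℕ) : ℂ) = (n:ℂ) + 1 := Nat.cast_add_one n
    rw [hcast, norm_div, norm_div, norm_mul, norm_mul, norm_pow, norm_pow,
      Complex.norm_natCast, Complex.norm_natCast]
    have hfact : ((n+1).factorial : ℝ) = ((n:ℝ)+1) * (n.factorial : ℝ) := by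
      rw [Nat.factorial_succ]
      push_cast
      ring
    have h1 : (0:ℝ) < (n:ℝ) + 1 := by positivity
    have h2 : (0:ℝ) < (n.factorial : ℝ) := by exact_mod_cast n.factorial_pos
    rw [hρ, hfact, pow_succ]
    exact aux_alg3 hW.ne' h2.ne' h1.ne'
  constructor
  · intro z hz
    have hzlt : h * ‖z‖ < 1 := by
      calc h * ‖z‖ < h * h⁻¹ := by exact (mul_lt_mul_iff_right₀ hpos).mpr hz
        _ = 1 := mul_inv_cancel₀ hpos.ne'
    set r : ℝ := (h * ‖z‖ + 1) / 2 with hr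
    have hr1 : r < 1 := by
      rw [hr]
      linarith
    have hrgt : h * ‖z‖ < r := by
      rw [hr]
      linarith
    apply summable_of_ratio_norm_eventually_le hr1
    have hev2 : ∀ᶠ n : ℕ in atTop, ρ n * ‖z‖ < r :=
      (hratio.mul_const ‖z‖).eventually_lt_const hrgt
    filter_upwards [key z, hev2] with n heq hlt
    rw [Real.norm_of_nonneg (norm_nonneg _), Real.norm_of_nonneg (norm_nonneg _), heq]
    have := norm_nonneg (wrightCoeff p q α a β b (n : ℂ) * z ^ n / (n.factorial : ℂ))
    nlinarith
  · intro z hz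
    rintro ⟨L, hL⟩
    set t : ℕ → ℂ := fun n => wrightCoeff p q α a β b (n : ℂ) * z ^ n / (n.factorial : ℂ) with ht
    have hznorm : (0:ℝ) < ‖z‖ := lt_trans (inv_pos.mpr hpos) hz
    have hzgt : 1 < h * ‖z‖ := by
      calc (1:ℝ) = h * h⁻¹ := (mul_inv_cancel₀ hpos.ne').symm
        _ < h * ‖z‖ := by exact (mul_lt_mul_iff_right₀ hpos).mpr hz
    have hev2 : ∀ᶠ n : ℕ in atTop, 1 < ρ n * ‖z‖ :=
      (hratio.mul_const ‖z‖).eventually_const_lt hzgt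
    have hev3 : ∀ᶠ n : ℕ in atTop, 0 < ‖t n‖ := by
      filter_upwards [wc_norm_pos p q α a β b hα hβ] with n hW
      simp only [ht, norm_div, norm_mul, norm_pow, Complex.norm_natCast]
      have h2 : (0:ℝ) < (n.factorial : ℝ) := by exact_mod_cast n.factorial_pos
      exact div_pos (mul_pos hW (pow_pos hznorm n)) h2
    obtain ⟨N, hN⟩ := eventually_atTop.mp ((key z).and (hev2.and hev3))
    have hmono : ∀ n, N ≤ n → ‖t N‖ ≤ ‖t n‖ := by
      intro n hn
      induction n, hn using Nat.le_induction with
      | base => exact le_rfl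
      | succ n hn ih =>
        have h1 := (hN n hn).1
        have h2 := (hN n hn).2.1
        have h3 := (hN n hn).2.2
        have : ‖t (n+1)‖ = (ρ n * ‖z‖) * ‖t n‖ := h1
        rw [this]
        nlinarith
    -- terms tend to zero
    have hterm : Tendsto t atTop (𝓝 0) := by
      have h1 : Tendsto (fun n : ℕ => ∑ k ∈ Finset.range (n+1), t k) atTop (𝓝 L) :=
        hL.comp (tendsto_add_atTop_nat 1)
      have h2 := h1.sub hL
      rw [sub_self] at h2
      refine h2.congr ?_
      intro n
      rw [Finset.sum_range_succ]
      ring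
    have h4 : ∀ᶠ n : ℕ in atTop, ‖t n‖ < ‖t N‖ := by
      have hn0 : Tendsto (fun n => ‖t n‖) atTop (𝓝 0) := by
        simpa using hterm.norm
      exact hn0.eventually_lt_const (hN N le_rfl).2.2
    obtain ⟨M, hM⟩ := eventually_atTop.mp h4
    have hMN := hmono (max M N) (le_max_right _ _)
    have := hM (max M N) (le_max_left _ _)
    linarith
end

section
/- Let p, q, α_r, β_r, a_r, b_r, g(n) and κ be as in the definition of the generalised Wright function, with α_r·n + a_r never a nonpositive integer. If κ < 0, then for every nonzero complex number z the series Σ_{n=0}^∞ g(n) z^n / n! diverges; in fact the sequence of terms g(n) z^n / n! is unbounded. -/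
set_option maxHeartbeats 1600000

open Filter Topology MeasureTheory Set

lemma abs_Gamma_le {s : ℂ} (hs : 0 < s.re) : ‖Complex.Gamma s‖ ≤ Real.Gamma s.re := by
  rw [Complex.Gamma_eq_integral hs, Real.Gamma_eq_integral hs]
  refine (norm_integral_le_of_norm_le (Real.GammaIntegral_convergent hs) ?_)
  filter_upwards [ae_restrict_mem measurableSet_Ioi] with x hx
  rw [norm_mul, Complex.norm_cpow_eq_rpow_re_of_pos hx, Complex.norm_real,
    Real.norm_of_nonneg (Real.exp_pos _).le, Complex.sub_re, Complex.one_re]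



noncomputable def realBeta (x y : ℝ) : ℝ :=
  Real.Gamma x * Real.Gamma y / Real.Gamma (x + y)

lemma ofReal_betaIntegrand {x y : ℝ} {t : ℝ} (ht : t ∈ Set.Ioc (0:ℝ) 1) :
    ((t ^ (x - 1) * (1 - t) ^ (y - 1) : ℝ) : ℂ) =
      (t : ℂ) ^ ((x:ℂ) - 1) * (1 - (t:ℂ)) ^ ((y:ℂ) - 1) := by
  rw [Complex.ofReal_mul, Complex.ofReal_cpow ht.1.le, Complex.ofReal_cpow (by linarith [ht.2])]
  push_cast
  ring_nf

lemma betaIntegral_ofReal (x y : ℝ) :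
    Complex.betaIntegral (x:ℂ) (y:ℂ) =
      ((∫ t in Set.Ioc (0:ℝ) 1, t ^ (x - 1) * (1 - t) ^ (y - 1)) : ℝ) :=
  calc Complex.betaIntegral (x:ℂ) (y:ℂ)
      = ∫ t in Set.Ioc (0:ℝ) 1, (t : ℂ) ^ ((x:ℂ) - 1) * (1 - (t:ℂ)) ^ ((y:ℂ) - 1) :=
        intervalIntegral.integral_of_le zero_le_one
    _ = ∫ t in Set.Ioc (0:ℝ) 1, ((t ^ (x - 1) * (1 - t) ^ (y - 1) : ℝ) : ℂ) :=
        by refine setIntegral_congr_fun measurableSet_Ioc fun t ht => ?_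
           exact (ofReal_betaIntegrand ht).symm
    _ = _ := integral_ofReal

lemma betaIntegral_real_eq {x y : ℝ} (hx : 0 < x) (hy : 0 < y) :
    Complex.betaIntegral (x:ℂ) (y:ℂ) = ((realBeta x y : ℝ) : ℂ) := by
  have h := Complex.Gamma_mul_Gamma_eq_betaIntegral
    (s := (x:ℂ)) (t := (y:ℂ)) (by simpa using hx) (by simpa using hy)
  have hxy : Complex.Gamma ((x:ℂ) + y) = ((Real.Gamma (x+y) : ℝ) : ℂ) := by
    rw [← Complex.Gamma_ofReal]; norm_cast
  have hne : ((Real.Gamma (x+y) : ℝ) : ℂ) ≠ 0 := by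
    exact_mod_cast (Real.Gamma_pos_of_pos (by positivity : (0:ℝ) < x + y)).ne'
  rw [Complex.Gamma_ofReal, Complex.Gamma_ofReal, hxy] at h
  have : Complex.betaIntegral (x:ℂ) (y:ℂ)
      = ((Real.Gamma x : ℂ) * (Real.Gamma y : ℂ)) / ((Real.Gamma (x+y) : ℝ) : ℂ) := by
    rw [h, mul_comm, mul_div_assoc, div_self hne, mul_one]
  rw [this, realBeta]
  push_cast
  ring

lemma norm_betaIntegrand_le {u v : ℂ} (hu : 0 < u.re) (hv : 0 < v.re) {t : ℝ}
    (ht : t ∈ Set.Ioc (0:ℝ) 1) :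
    ‖(t : ℂ) ^ (u - 1) * (1 - (t:ℂ)) ^ (v - 1)‖ ≤ t ^ (u.re - 1) * (1 - t) ^ (v.re - 1) := by
  have h1t : (0:ℝ) ≤ 1 - t := by linarith [ht.2]
  have hfac1 : ‖(t:ℂ) ^ (u - 1)‖ = t ^ (u.re - 1) := by
    rw [Complex.norm_cpow_eq_rpow_re_of_pos ht.1, Complex.sub_re,
      Complex.one_re]
  have hcast : ((1:ℂ) - t) = ((1 - t : ℝ) : ℂ) := by push_cast; ring
  have hfac2 : ‖(1 - (t:ℂ)) ^ (v - 1)‖ ≤ (1 - t) ^ (v.re - 1) := by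
    rw [hcast]
    rcases h1t.eq_or_lt with h | h
    · rw [← h]
      rcases eq_or_ne v 1 with rfl | hv2
      · simp
      · rw [Complex.ofReal_zero, Complex.zero_cpow (sub_ne_zero.mpr hv2)]
        simpa using Real.rpow_nonneg le_rfl _
    · rw [Complex.norm_cpow_eq_rpow_re_of_pos h, Complex.sub_re,
        Complex.one_re]
  calc ‖(t : ℂ) ^ (u - 1) * (1 - (t:ℂ)) ^ (v - 1)‖
      = t ^ (u.re - 1) * ‖(1 - (t:ℂ)) ^ (v - 1)‖ := by rw [norm_mul, hfac1]
    _ ≤ t ^ (u.re - 1) * ((1 - t) ^ (v.re - 1)) :=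
        mul_le_mul_of_nonneg_left hfac2 (Real.rpow_nonneg ht.1.le _)

lemma norm_betaIntegral_le {u v : ℂ} (hu : 0 < u.re) (hv : 0 < v.re) :
    ‖Complex.betaIntegral u v‖ ≤ realBeta u.re v.re := by
  have hg : IntegrableOn (fun t : ℝ => t ^ (u.re - 1) * (1 - t) ^ (v.re - 1))
      (Set.Ioc (0:ℝ) 1) := by
    have hI : IntegrableOn (fun t : ℝ => (t : ℂ) ^ ((u.re:ℂ) - 1) * (1 - (t:ℂ)) ^ ((v.re:ℂ) - 1))
        (Set.Ioc (0:ℝ) 1) := by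
      have := Complex.betaIntegral_convergent (u := (u.re:ℂ)) (v := (v.re:ℂ))
        (by simpa using hu) (by simpa using hv)
      rwa [intervalIntegrable_iff_integrableOn_Ioc_of_le zero_le_one] at this
    have hre : IntegrableOn
        (fun t : ℝ => ((t : ℂ) ^ ((u.re:ℂ) - 1) * (1 - (t:ℂ)) ^ ((v.re:ℂ) - 1)).re)
        (Set.Ioc (0:ℝ) 1) := hI.re
    refine hre.congr_fun (fun t ht => ?_) measurableSet_Ioc
    dsimp only
    rw [← ofReal_betaIntegrand ht, Complex.ofReal_re]
  have hb : ‖Complex.betaIntegral u v‖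
      ≤ ∫ t in Set.Ioc (0:ℝ) 1, ‖(t : ℂ) ^ (u - 1) * (1 - (t:ℂ)) ^ (v - 1)‖ := by
    have h0 := intervalIntegral.norm_integral_le_integral_norm
      (f := fun t : ℝ => (t : ℂ) ^ (u - 1) * (1 - (t:ℂ)) ^ (v - 1)) (μ := volume)
      (a := (0:ℝ)) (b := 1) zero_le_one
    rw [intervalIntegral.integral_of_le zero_le_one,
      intervalIntegral.integral_of_le zero_le_one] at h0
    simpa [Complex.betaIntegral, intervalIntegral.integral_of_le (zero_le_one' ℝ)] using h0
  refine hb.trans ?_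
  have hmono : ∫ t in Set.Ioc (0:ℝ) 1, ‖(t : ℂ) ^ (u - 1) * (1 - (t:ℂ)) ^ (v - 1)‖
      ≤ ∫ t in Set.Ioc (0:ℝ) 1, t ^ (u.re - 1) * (1 - t) ^ (v.re - 1) := by
    refine setIntegral_mono_on ?_ hg measurableSet_Ioc
      (fun t ht => norm_betaIntegrand_le hu hv ht)
    have := (Complex.betaIntegral_convergent hu hv).norm
    rwa [intervalIntegrable_iff_integrableOn_Ioc_of_le zero_le_one] at this
  refine hmono.trans_eq ?_
  have h1 := betaIntegral_ofReal u.re v.re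
  have h2 := betaIntegral_real_eq hu hv
  rw [h1] at h2
  exact_mod_cast h2




-- Lemma 3 : lower bound for |Γ(x + w)|
lemma norm_Gamma_add_ge {x : ℝ} (hx : 0 < x) {w : ℂ} (hw : 0 < w.re) :
    Real.Gamma (x + w.re) / Real.Gamma w.re * ‖Complex.Gamma w‖
      ≤ ‖Complex.Gamma ((x:ℂ) + w)‖ := by
  have hxw : (0:ℝ) < x + w.re := by linarith
  have hΓx : (0:ℝ) < Real.Gamma x := Real.Gamma_pos_of_pos hx
  have hΓw : (0:ℝ) < Real.Gamma w.re := Real.Gamma_pos_of_pos hw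
  have hΓxw : (0:ℝ) < Real.Gamma (x + w.re) := Real.Gamma_pos_of_pos hxw
  have h := Complex.Gamma_mul_Gamma_eq_betaIntegral (s := (x:ℂ)) (t := w)
    (by simpa using hx) hw
  have hre : ((x:ℂ) + w).re = x + w.re := by simp
  have hBle : ‖Complex.betaIntegral (x:ℂ) w‖ ≤ realBeta x w.re := by
    simpa using norm_betaIntegral_le (u := (x:ℂ)) (v := w) (by simpa using hx) hw
  have hnorm : Real.Gamma x * ‖Complex.Gamma w‖
      = ‖Complex.Gamma ((x:ℂ) + w)‖ * ‖Complex.betaIntegral (x:ℂ) w‖ := by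
    calc Real.Gamma x * ‖Complex.Gamma w‖
        = ‖Complex.Gamma (x:ℂ)‖ * ‖Complex.Gamma w‖ := by
          rw [Complex.Gamma_ofReal, Complex.norm_real, Real.norm_of_nonneg hΓx.le]
      _ = ‖Complex.Gamma ((x:ℂ) + w) * Complex.betaIntegral (x:ℂ) w‖ := by
          rw [← norm_mul, h]
      _ = _ := norm_mul _ _
  have key : Real.Gamma x * ‖Complex.Gamma w‖
      ≤ ‖Complex.Gamma ((x:ℂ) + w)‖ * realBeta x w.re := by
    rw [hnorm]
    exact mul_le_mul_of_nonneg_left hBle (norm_nonneg _)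
  rw [realBeta] at key
  rw [div_mul_eq_mul_div, div_le_iff₀ hΓw]
  have hkey2 : Real.Gamma x * ‖Complex.Gamma w‖ * Real.Gamma (x + w.re)
      ≤ ‖Complex.Gamma ((x:ℂ) + w)‖ * (Real.Gamma x * Real.Gamma w.re) := by
    have := mul_le_mul_of_nonneg_right key hΓxw.le
    calc Real.Gamma x * ‖Complex.Gamma w‖ * Real.Gamma (x + w.re)
        ≤ ‖Complex.Gamma ((x:ℂ) + w)‖ * (Real.Gamma x * Real.Gamma w.re / Real.Gamma (x+w.re))
            * Real.Gamma (x + w.re) := this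
      _ = ‖Complex.Gamma ((x:ℂ) + w)‖ * (Real.Gamma x * Real.Gamma w.re) := by
          field_simp
  nlinarith [norm_nonneg (Complex.Gamma ((x:ℂ) + w))]


-- Gamma shift
lemma Gamma_shift (s : ℂ) (M : ℕ) (hs : ∀ k : ℕ, k < M → s + k ≠ 0) :
    Complex.Gamma (s + M) = (∏ k ∈ Finset.range M, (s + k)) * Complex.Gamma s := by
  induction M with
  | zero => simp
  | succ m ih =>
    have h1 : s + (m+1 : ℕ) = (s + m) + 1 := by push_cast; ring
    rw [h1, Complex.Gamma_add_one _ (hs m (by omega)),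
      ih (fun k hk => hs k (by omega)), Finset.prod_range_succ]
    ring

-- t log t monotone
lemma mul_log_mono {u v : ℝ} (hu : 1 ≤ u) (huv : u ≤ v) :
    u * Real.log u ≤ v * Real.log v :=
  mul_le_mul huv (Real.log_le_log (by linarith) huv)
    (Real.log_nonneg hu) (by linarith)

-- factorial lower bound : m^m ≤ m! * e^m
lemma pow_self_le_factorial_mul_exp (m : ℕ) :
    (m : ℝ) ^ m ≤ (m.factorial : ℝ) * Real.exp m := by
  induction m with
  | zero => simp
  | succ n ih =>
    have hen : (1 + 1/(n+1:ℝ)) ≤ Real.exp (1/(n+1:ℝ)) := by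
      have := Real.add_one_le_exp (1/(n+1:ℝ)); linarith
    have key : ((n+1:ℝ)) ^ (n+1) ≤ (n:ℝ)^n * (n+1) * Real.exp 1 := by
      rcases Nat.eq_zero_or_pos n with rfl | hn
      · norm_num
      · have hn1 : (0:ℝ) < n := by exact_mod_cast hn
        have h2 : ((n+1:ℝ)/n) ^ n ≤ Real.exp 1 := by
          have : ((n+1:ℝ)/n) = 1 + 1/n := by field_simp
          rw [this]
          have h3 : (1 + 1/(n:ℝ)) ≤ Real.exp (1/n) := by
            have := Real.add_one_le_exp (1/(n:ℝ)); linarith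
          calc (1 + 1/(n:ℝ))^n ≤ (Real.exp (1/n))^n := by
                apply pow_le_pow_left₀ (by positivity) h3
            _ = Real.exp 1 := by
                rw [← Real.exp_nat_mul]
                congr 1
                field_simp
        have h4 : ((n+1:ℝ))^n ≤ (n:ℝ)^n * Real.exp 1 := by
          have := mul_le_mul_of_nonneg_left h2 (le_of_lt (pow_pos hn1 n))
          calc ((n+1:ℝ))^n = (n:ℝ)^n * ((n+1:ℝ)/n)^n := by
                rw [← mul_pow]; congr 1; field_simp
            _ ≤ (n:ℝ)^n * Real.exp 1 := this
        calc ((n+1:ℝ))^(n+1) = ((n+1:ℝ))^n * (n+1) := by ring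
          _ ≤ (n:ℝ)^n * Real.exp 1 * (n+1) := by
              apply mul_le_mul_of_nonneg_right h4 (by positivity)
          _ = (n:ℝ)^n * (n+1) * Real.exp 1 := by ring
    have hfac : ((n+1).factorial : ℝ) = (n+1) * n.factorial := by
      rw [Nat.factorial_succ]; push_cast; ring
    calc ((n+1:ℕ):ℝ) ^ (n+1) = ((n+1:ℝ))^(n+1) := by norm_num
      _ ≤ (n:ℝ)^n * (n+1) * Real.exp 1 := key
      _ ≤ ((n.factorial : ℝ) * Real.exp n) * (n+1) * Real.exp 1 := by
          have h5 : (n:ℝ)^n * (n+1) ≤ (n.factorial : ℝ) * Real.exp n * (n+1) :=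
            mul_le_mul_of_nonneg_right ih (by positivity)
          exact mul_le_mul_of_nonneg_right h5 (Real.exp_pos 1).le
      _ = ((n+1).factorial : ℝ) * (Real.exp n * Real.exp 1) := by rw [hfac]; ring
      _ = ((n+1).factorial : ℝ) * Real.exp ((n:ℝ)+1) := by rw [← Real.exp_add]
      _ = _ := by norm_num




-- 5a
lemma Gamma_le_exp {x : ℝ} (hx : 2 ≤ x) : Real.Gamma x ≤ Real.exp (x * Real.log x) := by
  set N := ⌈x⌉₊ with hN
  have hxpos : (0:ℝ) < x := by linarith
  have hN2 : 2 ≤ N := by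
    have : (2:ℝ) ≤ (N:ℝ) := le_trans hx (Nat.le_ceil x)
    exact_mod_cast this
  have hxN : x ≤ (N:ℝ) := Nat.le_ceil x
  have h1 : Real.Gamma x ≤ Real.Gamma N := by
    rcases eq_or_lt_of_le hxN with h | h
    · rw [h]
    · exact le_of_lt (Real.Gamma_strictMonoOn_Ici (by simpa using hx)
        (by simp only [mem_Ici]; linarith) h)
  have h2 : Real.Gamma (N:ℝ) = ((N-1).factorial : ℝ) := by
    have : ((N:ℝ)) = ((N-1:ℕ):ℝ) + 1 := by
      have : 1 ≤ N := by omega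
      push_cast [Nat.cast_sub this]; ring
    rw [this, Real.Gamma_nat_eq_factorial]
  have h3 : ((N-1).factorial : ℝ) ≤ ((N-1:ℕ):ℝ) ^ (N-1:ℕ) := by
    exact_mod_cast Nat.factorial_le_pow (N-1)
  have hN1x : ((N-1:ℕ):ℝ) ≤ x := by
    have : (N:ℝ) - 1 < x := by
      have := Nat.ceil_lt_add_one hxpos.le
      rw [← hN] at this; linarith
    have h4 : ((N-1:ℕ):ℝ) = (N:ℝ) - 1 := by
      have : 1 ≤ N := by omega
      push_cast [Nat.cast_sub this]; ring
    linarith [h4]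
  have h5 : ((N-1:ℕ):ℝ) ^ (N-1:ℕ) ≤ x ^ (N-1:ℕ) :=
    pow_le_pow_left₀ (by positivity) hN1x _
  have h6 : x ^ (N-1:ℕ) = Real.exp ((N-1:ℕ) * Real.log x) := by
    rw [← Real.rpow_natCast x (N-1), Real.rpow_def_of_pos hxpos]; ring_nf
  have h7 : Real.exp ((N-1:ℕ) * Real.log x) ≤ Real.exp (x * Real.log x) := by
    apply Real.exp_le_exp.mpr
    apply mul_le_mul_of_nonneg_right hN1x (Real.log_nonneg (by linarith))
  calc Real.Gamma x ≤ Real.Gamma N := h1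
    _ = _ := h2
    _ ≤ ((N-1:ℕ):ℝ) ^ (N-1:ℕ) := h3
    _ ≤ x ^ (N-1:ℕ) := h5
    _ = _ := h6
    _ ≤ _ := h7

-- 5b
lemma exp_le_Gamma {x : ℝ} (hx : 3 ≤ x) :
    Real.exp ((x-2) * Real.log (x-2) - x) ≤ Real.Gamma x := by
  set m := ⌊x⌋₊ with hm
  have hm3 : 3 ≤ m := by rw [hm]; exact Nat.le_floor (by exact_mod_cast hx)
  have hmx : (m:ℝ) ≤ x := Nat.floor_le (by linarith)
  have hxm : x < (m:ℝ) + 1 := Nat.lt_floor_add_one x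
  have h1 : Real.Gamma (m:ℝ) ≤ Real.Gamma x := by
    rcases eq_or_lt_of_le hmx with h | h
    · rw [h]
    · exact le_of_lt (Real.Gamma_strictMonoOn_Ici
        (by simp; exact_mod_cast le_trans (by norm_num) hm3)
        (by simpa using le_trans (by norm_num) hx) h)
  have h2 : Real.Gamma (m:ℝ) = ((m-1).factorial : ℝ) := by
    have hc : ((m:ℝ)) = ((m-1:ℕ):ℝ) + 1 := by
      have : 1 ≤ m := by omega
      push_cast [Nat.cast_sub this]; ring
    rw [hc, Real.Gamma_nat_eq_factorial]
  have h3 : ((m-1:ℕ):ℝ) ^ (m-1:ℕ) * Real.exp (-((m-1:ℕ):ℝ)) ≤ ((m-1).factorial : ℝ) := by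
    have := pow_self_le_factorial_mul_exp (m-1)
    have hep := Real.exp_pos ((m-1:ℕ):ℝ)
    rw [Real.exp_neg]
    rw [mul_inv_le_iff₀ hep]
    exact this
  have hm1 : ((m-1:ℕ):ℝ) = (m:ℝ) - 1 := by
    have : 1 ≤ m := by omega
    push_cast [Nat.cast_sub this]; ring
  have h4 : Real.exp ((x-2) * Real.log (x-2) - x)
      ≤ ((m-1:ℕ):ℝ) ^ (m-1:ℕ) * Real.exp (-((m-1:ℕ):ℝ)) := by
    have hx2 : (1:ℝ) ≤ x - 2 := by linarith
    have hle : x - 2 ≤ ((m-1:ℕ):ℝ) := by rw [hm1]; linarith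
    have hlog : (x-2) * Real.log (x-2) ≤ ((m-1:ℕ):ℝ) * Real.log ((m-1:ℕ):ℝ) :=
      mul_log_mono hx2 hle
    have hexp : -x ≤ -((m-1:ℕ):ℝ) := by rw [hm1]; linarith
    have hpow : ((m-1:ℕ):ℝ) ^ (m-1:ℕ) = Real.exp (((m-1:ℕ):ℝ) * Real.log ((m-1:ℕ):ℝ)) := by
      have hpos : (0:ℝ) < ((m-1:ℕ):ℝ) := by rw [hm1]; linarith
      rw [← Real.rpow_natCast _ (m-1), Real.rpow_def_of_pos hpos, mul_comm]
    rw [hpow, ← Real.exp_add]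
    apply Real.exp_le_exp.mpr
    linarith
  calc Real.exp ((x-2) * Real.log (x-2) - x)
      ≤ ((m-1:ℕ):ℝ) ^ (m-1:ℕ) * Real.exp (-((m-1:ℕ):ℝ)) := h4
    _ ≤ ((m-1).factorial : ℝ) := h3
    _ = Real.Gamma (m:ℝ) := h2.symm
    _ ≤ Real.Gamma x := h1



lemma numer_claim (αr A D c : ℝ) (hα : 0 < αr) (hA : 3 ≤ A) (hc : 0 < c) (M : ℕ) (hD : 0 ≤ D) :
    ∃ K : ℝ, ∀ᶠ n : ℕ in atTop,
      αr * n * Real.log n - K * n ≤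
        Real.log c + ((αr * n + A - 2) * Real.log (αr * n + A - 2) - (αr * n + A))
          - M * Real.log (αr * n + D) := by
  refine ⟨|Real.log c| + αr * |Real.log αr| + (αr + A) + M * |Real.log (αr + D + 1)| + M, ?_⟩
  have hcast : Tendsto (fun n : ℕ => (n:ℝ)) atTop atTop := tendsto_natCast_atTop_atTop
  filter_upwards [hcast.eventually_ge_atTop 1,
    (hcast.const_mul_atTop hα).eventually_ge_atTop 1] with n hn1 hαn1
  set x : ℝ := (n:ℝ) with hxdef
  have hx0 : (0:ℝ) < x := by linarith
  have hlogn0 : 0 ≤ Real.log x := Real.log_nonneg hn1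
  have hlognx : Real.log x ≤ x := by
    have := Real.log_le_sub_one_of_pos hx0; linarith
  -- (α x) log(α x) ≤ (αx + A - 2) log (αx + A - 2)
  have hb1 : (αr * x) * Real.log (αr * x) ≤ (αr * x + A - 2) * Real.log (αr * x + A - 2) :=
    mul_log_mono hαn1 (by linarith)
  have hlogmul : Real.log (αr * x) = Real.log αr + Real.log x :=
    Real.log_mul hα.ne' (by linarith)
  have hb1' : αr * x * Real.log x - αr * |Real.log αr| * x
      ≤ (αr * x + A - 2) * Real.log (αr * x + A - 2) := by
    have h1 : αr * x * Real.log αr ≥ -(αr * |Real.log αr| * x) := by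
      have := neg_abs_le (Real.log αr)
      nlinarith
    nlinarith [hb1, hlogmul]
  -- M log(αx + D) ≤ M |log(α+D+1)| + M * x
  have hb2 : (M:ℝ) * Real.log (αr * x + D) ≤ M * |Real.log (αr + D + 1)| + M * x := by
    have hle : αr * x + D ≤ (αr + D + 1) * x := by nlinarith
    have hpos : 0 < αr * x + D := by nlinarith
    have hlog1 : Real.log (αr * x + D) ≤ Real.log ((αr + D + 1) * x) :=
      Real.log_le_log hpos hle
    have hlog2 : Real.log ((αr + D + 1) * x) = Real.log (αr + D + 1) + Real.log x :=
      Real.log_mul (by nlinarith) (by linarith)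
    have h3 : Real.log (αr + D + 1) ≤ |Real.log (αr + D + 1)| := le_abs_self _
    have hM0 : (0:ℝ) ≤ M := Nat.cast_nonneg M
    nlinarith
  have hb3 : -( |Real.log c| * x) ≤ Real.log c := by
    have h := neg_abs_le (Real.log c)
    nlinarith [abs_nonneg (Real.log c)]
  have hb4 : αr * x + A ≤ (αr + A) * x := by nlinarith
  have e1 : (M:ℝ) * |Real.log (αr + D + 1)| ≤ (M:ℝ) * |Real.log (αr + D + 1)| * x := by
    have h0 : (0:ℝ) ≤ (M:ℝ) * |Real.log (αr + D + 1)| := by positivity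
    nlinarith
  linarith

lemma denom_claim (βr B : ℝ) (hβ : 0 < βr) :
    ∃ K : ℝ, ∀ᶠ n : ℕ in atTop,
      (βr * n + B) * Real.log (βr * n + B) ≤ βr * n * Real.log n + K * n := by
  refine ⟨|B| + (βr + |B| + 1) * |Real.log (βr + |B| + 1)|, ?_⟩
  have hcast : Tendsto (fun n : ℕ => (n:ℝ)) atTop atTop := tendsto_natCast_atTop_atTop
  filter_upwards [hcast.eventually_ge_atTop 1,
    (hcast.const_mul_atTop hβ).eventually_ge_atTop (2 + |B|)] with n hn1 hβn
  set x : ℝ := (n:ℝ) with hxdef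
  have hx0 : (0:ℝ) < x := by linarith
  have hlogn0 : 0 ≤ Real.log x := Real.log_nonneg hn1
  have hlognx : Real.log x ≤ x := by
    have := Real.log_le_sub_one_of_pos hx0; linarith
  have hB : -|B| ≤ B ∧ B ≤ |B| := ⟨neg_abs_le B, le_abs_self B⟩
  have hy0 : (2:ℝ) ≤ βr * x + B := by
    have := hB.1; linarith
  have hyle : βr * x + B ≤ (βr + |B| + 1) * x := by nlinarith [hB.2]
  have hc1 : (1:ℝ) ≤ βr + |B| + 1 := by nlinarith [abs_nonneg B]
  have hlogy : Real.log (βr * x + B) ≤ Real.log (βr + |B| + 1) + Real.log x := by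
    rw [← Real.log_mul (by positivity) (by linarith)]
    exact Real.log_le_log (by linarith) hyle
  have hlogc : 0 ≤ Real.log (βr + |B| + 1) := Real.log_nonneg hc1
  have h1 : (βr * x + B) * Real.log (βr * x + B)
      ≤ (βr * x + B) * (Real.log (βr + |B| + 1) + Real.log x) := by
    apply mul_le_mul_of_nonneg_left hlogy (by linarith)
  have h2 : (βr * x + B) * Real.log x ≤ βr * x * Real.log x + |B| * x := by
    have : B * Real.log x ≤ |B| * x := by nlinarith [hB.2]
    nlinarith
  have h3 : (βr * x + B) * Real.log (βr + |B| + 1)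
      ≤ (βr + |B| + 1) * |Real.log (βr + |B| + 1)| * x := by
    have h4 : Real.log (βr + |B| + 1) ≤ |Real.log (βr + |B| + 1)| := le_abs_self _
    nlinarith [abs_nonneg (Real.log (βr + |B| + 1))]
  nlinarith

lemma tendsto_exp_nlogn {δ : ℝ} (K : ℝ) (hδ : 0 < δ) :
    Tendsto (fun n : ℕ => Real.exp (δ * ((n:ℝ) * Real.log n) - K * n)) atTop atTop := by
  apply Real.tendsto_exp_atTop.comp
  have hcast : Tendsto (fun n : ℕ => (n:ℝ)) atTop atTop := tendsto_natCast_atTop_atTop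
  refine tendsto_atTop_mono' atTop ?_ hcast
  have hlog : Tendsto (fun n : ℕ => Real.log n) atTop atTop :=
    Real.tendsto_log_atTop.comp hcast
  filter_upwards [hcast.eventually_ge_atTop 1, hlog.eventually_ge_atTop ((K + 1)/δ)]
    with n hn1 hn2
  have : δ * Real.log n ≥ K + 1 := by
    rw [ge_iff_le, ← div_le_iff₀' hδ]; exact hn2
  nlinarith




lemma numer_bound (αr : ℝ) (hα : 0 < αr) (ar : ℂ) (M : ℕ) (hA : 3 ≤ ar.re + M)
    (n : ℕ) (hn : 1 ≤ n) (hk : ∀ k : ℕ, (αr:ℂ) * n + ar ≠ -(k:ℂ)) :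
    ‖Complex.Gamma (ar + M)‖ / Real.Gamma (ar.re + M)
        * Real.Gamma (αr * n + (ar.re + M)) / (αr * n + (‖ar‖ + M)) ^ M
      ≤ ‖Complex.Gamma ((αr:ℂ) * n + ar)‖ := by
  have hn1 : (1:ℝ) ≤ (n:ℝ) := by exact_mod_cast hn
  have hx : (0:ℝ) < αr * n := by nlinarith
  set s : ℂ := (αr:ℂ) * n + ar with hs
  have hsk : ∀ k : ℕ, k < M → s + k ≠ 0 := by
    intro k _ h
    exact hk k (by rw [← sub_eq_zero]; rw [← h]; push_cast; ring)
  have hshift := Gamma_shift s M hsk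
  -- bound on the product
  have hD : (0:ℝ) < αr * n + (‖ar‖ + M) := by positivity
  have hsnorm : ‖s‖ ≤ αr * n + ‖ar‖ := by
    calc ‖s‖ ≤ ‖(αr:ℂ) * n‖ + ‖ar‖ := norm_add_le _ _
      _ = αr * n + ‖ar‖ := by
          rw [norm_mul, Complex.norm_real, Complex.norm_natCast,
            Real.norm_of_nonneg hα.le]
  have hP : ‖∏ k ∈ Finset.range M, (s + (k:ℂ))‖ ≤ (αr * n + (‖ar‖ + M)) ^ M := by
    rw [norm_prod]
    calc ∏ k ∈ Finset.range M, ‖s + (k:ℂ)‖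
        ≤ ∏ _k ∈ Finset.range M, (αr * n + (‖ar‖ + M)) := by
          refine Finset.prod_le_prod (fun k _ => norm_nonneg _) (fun k hkk => ?_)
          have hkM : (k:ℝ) ≤ M := by
            exact_mod_cast (Finset.mem_range.mp hkk).le
          calc ‖s + (k:ℂ)‖ ≤ ‖s‖ + ‖(k:ℂ)‖ := norm_add_le _ _
            _ = ‖s‖ + k := by rw [Complex.norm_natCast]
            _ ≤ αr * n + ‖ar‖ + M := by linarith
            _ = αr * n + (‖ar‖ + M) := by ring
      _ = (αr * n + (‖ar‖ + M)) ^ M := by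
          rw [Finset.prod_const, Finset.card_range]
  -- lower bound on Gamma (s + M)
  have hwre : (0:ℝ) < (ar + M).re := by
    have : (ar + (M:ℂ)).re = ar.re + M := by simp
    rw [this]; linarith
  have hlow : Real.Gamma (αr * n + (ar.re + M)) / Real.Gamma (ar.re + M)
      * ‖Complex.Gamma (ar + M)‖ ≤ ‖Complex.Gamma (s + M)‖ := by
    have h := norm_Gamma_add_ge (x := αr * n) hx (w := ar + M) hwre
    have he1 : (ar + (M:ℂ)).re = ar.re + M := by simp
    have he2 : ((αr * n : ℝ):ℂ) + (ar + M) = s + M := by push_cast; ring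
    rw [he1, he2] at h
    exact h
  -- combine
  have hΓs : ‖Complex.Gamma (s + M)‖ = ‖∏ k ∈ Finset.range M, (s + (k:ℂ))‖
      * ‖Complex.Gamma s‖ := by rw [hshift, norm_mul]
  rw [div_le_iff₀ (by positivity : (0:ℝ) < (αr * n + (‖ar‖ + M)) ^ M)]
  have hkey : ‖Complex.Gamma (ar + M)‖ / Real.Gamma (ar.re + M)
      * Real.Gamma (αr * n + (ar.re + M)) ≤ ‖Complex.Gamma (s + M)‖ := by
    calc _ = Real.Gamma (αr * n + (ar.re + M)) / Real.Gamma (ar.re + M)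
        * ‖Complex.Gamma (ar + M)‖ := by ring
      _ ≤ _ := hlow
  calc ‖Complex.Gamma (ar + M)‖ / Real.Gamma (ar.re + M)
      * Real.Gamma (αr * n + (ar.re + M))
      ≤ ‖Complex.Gamma (s + M)‖ := hkey
    _ = ‖∏ k ∈ Finset.range M, (s + (k:ℂ))‖ * ‖Complex.Gamma s‖ := hΓs
    _ ≤ (αr * n + (‖ar‖ + M)) ^ M * ‖Complex.Gamma s‖ :=
        mul_le_mul_of_nonneg_right hP (norm_nonneg _)
    _ = ‖Complex.Gamma s‖ * (αr * n + (‖ar‖ + M)) ^ M := by ring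


lemma re_mix (c : ℝ) (n : ℕ) (w : ℂ) : ((c:ℂ) * n + w).re = c * n + w.re := by
  simp

/-- If `κ = 1 + Σ β_r − Σ α_r < 0`, the series defining the generalised Wright
function diverges for every nonzero `z`: indeed its terms are unbounded. -/
theorem wright_divergent_of_kappa_neg (p q : ℕ) (α : Fin p → ℝ) (a : Fin p → ℂ)
    (β : Fin q → ℝ) (b : Fin q → ℂ)
    (hα : ∀ r, 0 < α r) (hβ : ∀ r, 0 < β r)
    (ha : ∀ (n : ℕ) (r : Fin p) (m : ℕ), (α r : ℂ) * (n : ℂ) + a r ≠ -(m : ℂ))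
    (hκ : 1 + ∑ r, β r - ∑ r, α r < 0) :
    ∀ z : ℂ, z ≠ 0 →
      ¬ BddAbove (Set.range fun n : ℕ =>
        ‖wrightCoeff p q α a β b (n : ℂ) * z ^ n / (n.factorial : ℂ)‖) ∧
      ¬ ∃ L : ℂ, Tendsto
        (fun N : ℕ => ∑ n ∈ Finset.range N,
          wrightCoeff p q α a β b (n : ℂ) * z ^ n / (n.factorial : ℂ))
        atTop (𝓝 L) := by
  intro z hz
  suffices hT : Tendsto (fun n : ℕ =>
      ‖wrightCoeff p q α a β b (n : ℂ) * z ^ n / (n.factorial : ℂ)‖) atTop atTop by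
    constructor
    · rintro ⟨Mb, hMb⟩
      obtain ⟨n, hn⟩ := (hT.eventually_ge_atTop (Mb + 1)).exists
      have h2 : ‖wrightCoeff p q α a β b (n : ℂ) * z ^ n / (n.factorial : ℂ)‖ ≤ Mb :=
        hMb ⟨n, rfl⟩
      linarith
    · rintro ⟨L, hL⟩
      have h1 : Tendsto (fun N : ℕ => ∑ n ∈ Finset.range (N+1),
          wrightCoeff p q α a β b (n : ℂ) * z ^ n / (n.factorial : ℂ)) atTop (𝓝 L) :=
        hL.comp (tendsto_add_atTop_nat 1)
      have h0 : Tendsto (fun N : ℕ =>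
          wrightCoeff p q α a β b (N : ℂ) * z ^ N / (N.factorial : ℂ)) atTop (𝓝 (L - L)) := by
        have hsub := h1.sub hL
        refine hsub.congr fun N => ?_
        rw [Finset.sum_range_succ]; ring
      rw [sub_self] at h0
      have hnorm0 : Tendsto (fun N : ℕ =>
          ‖wrightCoeff p q α a β b (N : ℂ) * z ^ N / (N.factorial : ℂ)‖) atTop (𝓝 0) := by
        simpa using h0.norm
      obtain ⟨n, hn1, hn2⟩ := ((hT.eventually_ge_atTop 1).and
        (hnorm0.eventually (gt_mem_nhds (by norm_num : (0:ℝ) < 1/2)))).exists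
      linarith
  -- main part
  have hδ : 0 < ∑ r, α r - ∑ r, β r - 1 := by linarith
  obtain ⟨c₀, hc₀⟩ := (Set.finite_range fun r : Fin p => 3 - (a r).re).bddAbove
  obtain ⟨M, hM⟩ := exists_nat_ge c₀
  have hA : ∀ r, 3 ≤ (a r).re + M := by
    intro r
    have h1 : 3 - (a r).re ≤ c₀ := hc₀ ⟨r, rfl⟩
    linarith
  have hγ : ∀ r, Complex.Gamma (a r + M) ≠ 0 := by
    intro r
    apply Complex.Gamma_ne_zero
    intro m hm
    exact ha 0 r (m + M) (by push_cast; push_cast at hm; linear_combination hm)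
  have hcpos : ∀ r, 0 < ‖Complex.Gamma (a r + M)‖ / Real.Gamma ((a r).re + M) := by
    intro r
    exact div_pos (norm_pos_iff.mpr (hγ r))
      (Real.Gamma_pos_of_pos (by have := hA r; linarith))
  have hzpos : 0 < ‖z‖ := norm_pos_iff.mpr hz
  choose Kn hKn using fun r : Fin p =>
    numer_claim (α r) ((a r).re + M) (‖a r‖ + M)
      (‖Complex.Gamma (a r + M)‖ / Real.Gamma ((a r).re + M))
      (hα r) (hA r) (hcpos r) M (by positivity)
  choose Kd hKd using fun r : Fin q => denom_claim (β r) ((b r).re) (hβ r)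
  set δ : ℝ := ∑ r, α r - ∑ r, β r - 1 with hδdef
  set Ktot : ℝ := (∑ r, Kn r) + (∑ r, Kd r) + |Real.log ‖z‖| with hKdef
  have hcast : Tendsto (fun n : ℕ => (n:ℝ)) atTop atTop := tendsto_natCast_atTop_atTop
  have hE2 : ∀ᶠ n : ℕ in atTop, ∀ r : Fin q, 2 ≤ β r * n + (b r).re := by
    rw [eventually_all]
    intro r
    filter_upwards [(hcast.const_mul_atTop (hβ r)).eventually_ge_atTop (2 - (b r).re)]
      with n hn
    linarith
  have hE3 := eventually_all.mpr hKn
  have hE4 := eventually_all.mpr hKd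
  have hmain : ∀ᶠ n : ℕ in atTop,
      Real.exp (δ * ((n:ℝ) * Real.log n) - Ktot * n)
        ≤ ‖wrightCoeff p q α a β b (n : ℂ) * z ^ n / (n.factorial : ℂ)‖ := by
    filter_upwards [eventually_ge_atTop 1, hE2, hE3, hE4] with n hn1 h2 h3 h4
    have hn1' : (1:ℝ) ≤ (n:ℝ) := by exact_mod_cast hn1
    have hnpos : (0:ℝ) < (n:ℝ) := by linarith
    -- rewrite the norm
    have hWC : wrightCoeff p q α a β b (n:ℂ) * z ^ n / (n.factorial : ℂ)
        = ((∏ r, Complex.Gamma ((α r : ℂ) * n + a r)) * z ^ n)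
          / ((∏ r, Complex.Gamma ((β r : ℂ) * n + b r)) * (n.factorial : ℂ)) := by
      rw [wrightCoeff]; ring
    rw [hWC, norm_div, norm_mul, norm_mul, norm_prod, norm_prod, norm_pow,
      Complex.norm_natCast]
    -- denominator Gammas are nonzero
    have hbpos : ∀ r : Fin q, 0 < ‖Complex.Gamma ((β r:ℂ) * n + b r)‖ := by
      intro r
      apply norm_pos_iff.mpr
      apply Complex.Gamma_ne_zero_of_re_pos
      rw [re_mix]
      linarith [h2 r]
    -- numerator lower bound, per factor
    have hnum : ∀ r : Fin p,
        ‖Complex.Gamma (a r + M)‖ / Real.Gamma ((a r).re + M)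
            * Real.Gamma (α r * n + ((a r).re + M)) / (α r * n + (‖a r‖ + M)) ^ M
          ≤ ‖Complex.Gamma ((α r:ℂ) * n + a r)‖ :=
      fun r => numer_bound (α r) (hα r) (a r) M (hA r) n hn1 (fun k => ha n r k)
    -- denominator upper bound, per factor
    have hden : ∀ r : Fin q,
        ‖Complex.Gamma ((β r:ℂ) * n + b r)‖ ≤ Real.Gamma (β r * n + (b r).re) := by
      intro r
      have := abs_Gamma_le (s := (β r:ℂ) * n + b r) (by rw [re_mix]; linarith [h2 r])
      rwa [re_mix] at this
    -- nonnegativity facts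
    have hLBpos : ∀ r : Fin p,
        0 < ‖Complex.Gamma (a r + M)‖ / Real.Gamma ((a r).re + M)
            * Real.Gamma (α r * n + ((a r).re + M)) / (α r * n + (‖a r‖ + M)) ^ M := by
      intro r
      have hb : (0:ℝ) < α r * n + (‖a r‖ + M) := by
        have := (hα r); nlinarith [norm_nonneg (a r), Nat.cast_nonneg (α := ℝ) M]
      have hg : 0 < Real.Gamma (α r * n + ((a r).re + M)) := by
        apply Real.Gamma_pos_of_pos
        have := hA r
        nlinarith [(hα r).le]
      exact div_pos (mul_pos (hcpos r) hg) (pow_pos hb M)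
    have hΓbpos : ∀ r : Fin q, 0 < Real.Gamma (β r * n + (b r).re) :=
      fun r => Real.Gamma_pos_of_pos (by linarith [h2 r])
    have hfacpos : (0:ℝ) < (n.factorial : ℝ) := by exact_mod_cast n.factorial_pos
    -- step 1 : compare with real-Gamma quotient
    have hprodnum : (∏ r, (‖Complex.Gamma (a r + M)‖ / Real.Gamma ((a r).re + M)
            * Real.Gamma (α r * n + ((a r).re + M)) / (α r * n + (‖a r‖ + M)) ^ M))
          ≤ ∏ r, ‖Complex.Gamma ((α r:ℂ) * n + a r)‖ :=
      Finset.prod_le_prod (fun r _ => (hLBpos r).le) (fun r _ => hnum r)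
    have hprodden : (∏ r, ‖Complex.Gamma ((β r:ℂ) * n + b r)‖)
          ≤ ∏ r, Real.Gamma (β r * n + (b r).re) :=
      Finset.prod_le_prod (fun r _ => (norm_nonneg _)) (fun r _ => hden r)
    have hstep1 : (∏ r, (‖Complex.Gamma (a r + M)‖ / Real.Gamma ((a r).re + M)
            * Real.Gamma (α r * n + ((a r).re + M)) / (α r * n + (‖a r‖ + M)) ^ M))
            * ‖z‖ ^ n
            / ((∏ r, Real.Gamma (β r * n + (b r).re)) * (n.factorial : ℝ))
        ≤ (∏ r, ‖Complex.Gamma ((α r:ℂ) * n + a r)‖) * ‖z‖ ^ n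
            / ((∏ r, ‖Complex.Gamma ((β r:ℂ) * n + b r)‖) * (n.factorial : ℝ)) := by
      apply div_le_div₀
      · positivity
      · exact mul_le_mul_of_nonneg_right hprodnum (by positivity)
      · exact mul_pos (Finset.prod_pos (fun r _ => hbpos r)) hfacpos
      · exact mul_le_mul_of_nonneg_right hprodden hfacpos.le
    -- step 2 : exponential lower bound of the real quotient
    have hexpnum : Real.exp ((∑ r, (Real.log (‖Complex.Gamma (a r + M)‖
              / Real.Gamma ((a r).re + M))
            + ((α r * n + ((a r).re + M) - 2) * Real.log (α r * n + ((a r).re + M) - 2)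
              - (α r * n + ((a r).re + M)))
            - M * Real.log (α r * n + (‖a r‖ + M)))) + n * Real.log ‖z‖)
        ≤ (∏ r, (‖Complex.Gamma (a r + M)‖ / Real.Gamma ((a r).re + M)
            * Real.Gamma (α r * n + ((a r).re + M)) / (α r * n + (‖a r‖ + M)) ^ M))
            * ‖z‖ ^ n := by
      rw [Real.exp_add, Real.exp_sum]
      have hzeq : Real.exp ((n:ℝ) * Real.log ‖z‖) = ‖z‖ ^ n := by
        rw [mul_comm, ← Real.rpow_def_of_pos hzpos, Real.rpow_natCast]
      rw [hzeq]
      apply mul_le_mul_of_nonneg_right _ (by positivity)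
      apply Finset.prod_le_prod (fun r _ => (Real.exp_pos _).le)
      intro r _
      have hb : (0:ℝ) < α r * n + (‖a r‖ + M) := by
        have := (hα r); nlinarith [norm_nonneg (a r), Nat.cast_nonneg (α := ℝ) M]
      have hx3 : 3 ≤ α r * n + ((a r).re + M) := by
        have := hA r
        nlinarith [(hα r).le]
      rw [Real.exp_sub, Real.exp_add,
        Real.exp_log (hcpos r),
        show Real.exp ((M:ℝ) * Real.log (α r * n + (‖a r‖ + M)))
            = (α r * n + (‖a r‖ + M)) ^ M by
          rw [mul_comm, ← Real.rpow_def_of_pos hb, Real.rpow_natCast]]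
      have hG := exp_le_Gamma hx3
      gcongr
      exact (hcpos r).le
    have hexpden : (∏ r, Real.Gamma (β r * n + (b r).re)) * (n.factorial : ℝ)
        ≤ Real.exp ((∑ r, (β r * n + (b r).re) * Real.log (β r * n + (b r).re))
            + n * Real.log n) := by
      rw [Real.exp_add, Real.exp_sum]
      have hfact : (n.factorial : ℝ) ≤ Real.exp ((n:ℝ) * Real.log n) := by
        have h7 : (n.factorial : ℝ) ≤ (n:ℝ) ^ n := by
          exact_mod_cast Nat.factorial_le_pow n
        have h8 : ((n:ℝ)) ^ n = Real.exp ((n:ℝ) * Real.log n) := by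
          rw [mul_comm, ← Real.rpow_def_of_pos hnpos, Real.rpow_natCast]
        linarith
      apply mul_le_mul _ hfact hfacpos.le (by positivity)
      apply Finset.prod_le_prod (fun r _ => (hΓbpos r).le)
      intro r _
      exact Gamma_le_exp (h2 r)
    -- step 3 : combine
    have hstep2 : Real.exp ((∑ r, (Real.log (‖Complex.Gamma (a r + M)‖
              / Real.Gamma ((a r).re + M))
            + ((α r * n + ((a r).re + M) - 2) * Real.log (α r * n + ((a r).re + M) - 2)
              - (α r * n + ((a r).re + M)))
            - M * Real.log (α r * n + (‖a r‖ + M)))) + n * Real.log ‖z‖)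
          / Real.exp ((∑ r, (β r * n + (b r).re) * Real.log (β r * n + (b r).re))
            + n * Real.log n)
        ≤ (∏ r, (‖Complex.Gamma (a r + M)‖ / Real.Gamma ((a r).re + M)
            * Real.Gamma (α r * n + ((a r).re + M)) / (α r * n + (‖a r‖ + M)) ^ M))
            * ‖z‖ ^ n
            / ((∏ r, Real.Gamma (β r * n + (b r).re)) * (n.factorial : ℝ)) := by
      apply div_le_div₀ _ hexpnum (mul_pos (Finset.prod_pos fun r _ => hΓbpos r) hfacpos) hexpden
      exact mul_nonneg (Finset.prod_nonneg fun r _ => (hLBpos r).le) (pow_nonneg hzpos.le n)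
    -- step 4 : lower bound the exponent
    have hsum1 : (∑ r, α r) * ((n:ℝ) * Real.log n) - (∑ r, Kn r) * n
        ≤ ∑ r, (Real.log (‖Complex.Gamma (a r + M)‖ / Real.Gamma ((a r).re + M))
            + ((α r * n + ((a r).re + M) - 2) * Real.log (α r * n + ((a r).re + M) - 2)
              - (α r * n + ((a r).re + M)))
            - M * Real.log (α r * n + (‖a r‖ + M))) := by
      have hs := Finset.sum_le_sum (fun r (_ : r ∈ Finset.univ) => h3 r)
      calc (∑ r, α r) * ((n:ℝ) * Real.log n) - (∑ r, Kn r) * n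
          = ∑ r, (α r * n * Real.log n - Kn r * n) := by
            simp only [Finset.sum_sub_distrib, ← Finset.sum_mul]; ring
        _ ≤ _ := hs
    have hsum2 : ∑ r, (β r * n + (b r).re) * Real.log (β r * n + (b r).re)
        ≤ (∑ r, β r) * ((n:ℝ) * Real.log n) + (∑ r, Kd r) * n := by
      have hs := Finset.sum_le_sum (fun r (_ : r ∈ Finset.univ) => h4 r)
      calc ∑ r, (β r * n + (b r).re) * Real.log (β r * n + (b r).re)
          ≤ ∑ r, (β r * n * Real.log n + Kd r * n) := hs
        _ = (∑ r, β r) * ((n:ℝ) * Real.log n) + (∑ r, Kd r) * n := by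
            simp only [Finset.sum_add_distrib, ← Finset.sum_mul]; ring
    have hlogz : -( |Real.log ‖z‖| * n) ≤ (n:ℝ) * Real.log ‖z‖ := by
      nlinarith [neg_abs_le (Real.log ‖z‖), abs_nonneg (Real.log ‖z‖)]
    have hexp_mono : Real.exp (δ * ((n:ℝ) * Real.log n) - Ktot * n)
        ≤ Real.exp ((∑ r, (Real.log (‖Complex.Gamma (a r + M)‖
              / Real.Gamma ((a r).re + M))
            + ((α r * n + ((a r).re + M) - 2) * Real.log (α r * n + ((a r).re + M) - 2)
              - (α r * n + ((a r).re + M)))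
            - M * Real.log (α r * n + (‖a r‖ + M)))) + n * Real.log ‖z‖
          - ((∑ r, (β r * n + (b r).re) * Real.log (β r * n + (b r).re))
            + n * Real.log n)) := by
      apply Real.exp_le_exp.mpr
      rw [hδdef, hKdef]
      linarith
    rw [← Real.exp_sub] at hstep2
    exact hexp_mono.trans (hstep2.trans hstep1)
  exact tendsto_atTop_mono' atTop hmain (tendsto_exp_nlogn Ktot hδ)
end

section
/- Let 0 < σ < 1 and let ν be real such that σn − ν − 1/2 is not a nonpositive integer for any natural number n. Set ϑ = −ν − 3/2 and define Ψ(w) = Σ_{n=0}^∞ Γ(σn − ν − 1/2) w^n / Γ(n + 3/2) (which converges for all complex w). Then for every complex number ζ: Σ_{n=0}^∞ ζ^n / (Γ(n + 3/2) Γ(−σn + ν + 3/2)) = (i/(2π)) · [ e^{iπϑ} Ψ(ζ e^{iπσ}) − e^{−iπϑ} Ψ(ζ e^{−iπσ}) ]. Equivalently, (z/2)^{−ν−1} L_ν(z; −σ) = (i/(2π)){ e^{iπϑ} Ψ(ζ e^{iπσ}) − e^{−iπϑ} Ψ(ζ e^{−iπσ}) } with ζ = z²/4. -/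
open Filter Topology

/-- The Wright function `₂Ψ₁(w) = Σ_{n≥0} Γ(σn−ν−1/2) wⁿ / Γ(n+3/2)`. -/
noncomputable def wrightPsi21 (σ ν : ℝ) (w : ℂ) : ℂ :=
  ∑' n : ℕ, Complex.Gamma ((σ : ℂ) * (n : ℂ) - (ν : ℂ) - 1 / 2) * w ^ n /
    Complex.Gamma ((n : ℂ) + 3 / 2)

/-!
By the reflection formula, `1/Γ(1 - s) = Γ(s) sin(πs)/π`, and writing the sine through
exponentials splits each term of the Struve series, with `s = σn − ν − 1/2`, into the difference
of the `n`-th terms of `Ψ(ζe^{iπσ})` and `Ψ(ζe^{−iπσ})`. Both Wright series converge by the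
ratio test: Wendel's inequality `Γ(s + σ) ≤ Γ(s) s^σ` (log-convexity of `Γ`) bounds the ratio of
consecutive terms by `|w| n^{σ−1} → 0`.
-/

namespace Real

theorem Gamma_add_le_Gamma_mul_rpow {s σ : ℝ} (hs : 0 < s) (hσ0 : 0 < σ) (hσ1 : σ < 1) :
    Gamma (s + σ) ≤ Gamma s * s ^ σ := by
  have hconv := Gamma_mul_add_mul_le_rpow_Gamma_mul_rpow_Gamma hs (by linarith : 0 < s + 1)
    (by linarith : 0 < 1 - σ) hσ0 (by ring)
  have hΓ := Gamma_pos_of_pos hs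
  calc Gamma (s + σ) = Gamma ((1 - σ) * s + σ * (s + 1)) := by ring_nf
    _ ≤ Gamma s ^ (1 - σ) * (s * Gamma s) ^ σ := by rwa [← Gamma_add_one hs.ne']
    _ = Gamma s * s ^ σ := by
      rw [mul_rpow hs.le hΓ.le, mul_left_comm, ← rpow_add hΓ, sub_add_cancel, rpow_one,
        mul_comm]

end Real

namespace Complex

open Real

theorem one_div_Gamma_one_sub {s : ℂ} (hs : ∀ m : ℕ, s ≠ -m) :
    1 / Gamma (1 - s) = Gamma s * sin (π * s) / π := by
  have hπ : (π : ℂ) ≠ 0 := ofReal_ne_zero.2 Real.pi_ne_zero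
  have hΓ : Gamma s ≠ 0 := Gamma_ne_zero hs
  have hrefl := Gamma_mul_Gamma_one_sub s
  by_cases hsin : sin (π * s) = 0
  · rw [hsin, div_zero, mul_eq_zero, or_iff_right hΓ] at hrefl
    rw [hrefl, hsin]
    simp
  · rw [eq_div_iff_mul_eq hsin] at hrefl
    have hΓ' : Gamma (1 - s) ≠ 0 := by
      rintro h
      rw [h, mul_zero, zero_mul] at hrefl
      exact hπ hrefl.symm
    rw [div_eq_div_iff hΓ' hπ]
    linear_combination -hrefl

theorem sin_pi_mul_div_pi_eq_exp_sub_exp (s : ℂ) :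
    sin (π * s) / π = I / (2 * π) * (exp (π * I * (s - 1)) - exp (-π * I * (s - 1))) := by
  rw [show (π : ℂ) * s = π * (s - 1) + π by ring, sin_add_pi, sin]
  ring_nf

theorem exp_mul_mul_exp_pow (a b ζ : ℂ) (n : ℕ) :
    exp a * (ζ * exp b) ^ n = ζ ^ n * exp (a + n * b) := by
  rw [mul_pow, ← exp_nat_mul, exp_add]
  ring

end Complex

open Complex in
theorem norm_Gamma_mul_pow_div_Gamma {a b : ℝ} (ha : 0 < a) (hb : 0 < b) (w : ℂ) (n : ℕ) :
    ‖Gamma (a : ℂ) * w ^ n / Gamma (b : ℂ)‖ = Real.Gamma a * ‖w‖ ^ n / Real.Gamma b := by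
  rw [Gamma_ofReal, Gamma_ofReal, norm_div, norm_mul, norm_pow, norm_real, norm_real,
    Real.norm_of_nonneg (Real.Gamma_pos_of_pos ha).le,
    Real.norm_of_nonneg (Real.Gamma_pos_of_pos hb).le]

open Complex in
theorem summable_wrightPsi21 {σ : ℝ} (hσ0 : 0 < σ) (hσ1 : σ < 1) (ν : ℝ) (w : ℂ) :
    Summable fun n : ℕ => Gamma ((σ : ℂ) * (n : ℂ) - (ν : ℂ) - 1 / 2) * w ^ n /
      Gamma ((n : ℂ) + 3 / 2) := by
  have hlin : Tendsto (fun n : ℕ => σ * n - ν - 1 / 2) atTop atTop :=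
    tendsto_atTop_add_const_right _ _ <| tendsto_atTop_add_const_right _ _ <|
      tendsto_natCast_atTop_atTop.const_mul_atTop hσ0
  have hgap : Tendsto (fun n : ℕ => (n + 3 / 2) - (σ * n - ν - 1 / 2)) atTop atTop := by
    refine (tendsto_atTop_add_const_right _ (2 + ν) <|
      tendsto_natCast_atTop_atTop.const_mul_atTop (sub_pos.2 hσ1)).congr fun n => ?_
    ring
  have hdecay : Tendsto (fun n : ℕ => ‖w‖ * ((n : ℝ) + 3 / 2) ^ (σ - 1)) atTop (𝓝 0) := by
    have hpow := (tendsto_rpow_neg_atTop (sub_pos.2 hσ1)).comp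
      (tendsto_atTop_add_const_right _ (3 / 2 : ℝ) tendsto_natCast_atTop_atTop)
    simpa [Function.comp_def] using hpow.const_mul ‖w‖
  refine summable_of_ratio_norm_eventually_le (r := 1 / 2) (by norm_num) ?_
  filter_upwards [hlin.eventually_gt_atTop 0, hgap.eventually_ge_atTop 0,
    hdecay.eventually_le_const (by norm_num : (0 : ℝ) < 1 / 2)] with n hs hsx hr
  set s : ℝ := σ * n - ν - 1 / 2
  have hx : (0 : ℝ) < n + 3 / 2 := by positivity
  have hcast : (σ : ℂ) * (n : ℂ) - ν - 1 / 2 = (s : ℂ) := by push_cast [s]; ring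
  have hcast' : (σ : ℂ) * ((n + 1 : ℕ) : ℂ) - ν - 1 / 2 = ((s + σ : ℝ) : ℂ) := by
    push_cast [s]; ring
  have hx' : ((n + 1 : ℕ) : ℂ) + 3 / 2 = ((n + 3 / 2 + 1 : ℝ) : ℂ) := by push_cast; ring
  rw [hcast, hcast', hx', show ((n : ℂ) + 3 / 2) = ((n + 3 / 2 : ℝ) : ℂ) by push_cast; ring,
    norm_Gamma_mul_pow_div_Gamma hs hx,
    norm_Gamma_mul_pow_div_Gamma (by positivity) (by positivity), Real.Gamma_add_one hx.ne']
  have hwendel : Real.Gamma (s + σ) ≤ Real.Gamma s * (n + 3 / 2) ^ σ :=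
    (Real.Gamma_add_le_Gamma_mul_rpow hs hσ0 hσ1).trans <| by gcongr; linarith
  calc Real.Gamma (s + σ) * ‖w‖ ^ (n + 1) / ((n + 3 / 2) * Real.Gamma (n + 3 / 2))
      ≤ Real.Gamma s * (n + 3 / 2) ^ σ * ‖w‖ ^ (n + 1) /
          ((n + 3 / 2) * Real.Gamma (n + 3 / 2)) := by
        gcongr
    _ = ‖w‖ * ((n : ℝ) + 3 / 2) ^ (σ - 1) *
          (Real.Gamma s * ‖w‖ ^ n / Real.Gamma (n + 3 / 2)) := by
        rw [Real.rpow_sub hx, Real.rpow_one]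
        field_simp
        ring
    _ ≤ 1 / 2 * (Real.Gamma s * ‖w‖ ^ n / Real.Gamma (n + 3 / 2)) := by
        gcongr

open Complex Real in
theorem struve_term_eq_sub_wrightPsi21_terms (σ ν : ℝ) (n : ℕ) (ζ : ℂ)
    (hreg : ∀ m : ℕ, (σ : ℂ) * (n : ℂ) - (ν : ℂ) - 1 / 2 ≠ -(m : ℂ)) :
    ζ ^ n / (Gamma ((n : ℂ) + 3 / 2) * Gamma (-(σ : ℂ) * (n : ℂ) + (ν : ℂ) + 3 / 2))
      = I / (2 * (π : ℂ)) *
        (exp ((π : ℂ) * I * (-(ν : ℂ) - 3 / 2)) *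
            (Gamma ((σ : ℂ) * (n : ℂ) - (ν : ℂ) - 1 / 2) *
              (ζ * exp ((π : ℂ) * I * (σ : ℂ))) ^ n / Gamma ((n : ℂ) + 3 / 2)) -
          exp (-(π : ℂ) * I * (-(ν : ℂ) - 3 / 2)) *
            (Gamma ((σ : ℂ) * (n : ℂ) - (ν : ℂ) - 1 / 2) *
              (ζ * exp (-(π : ℂ) * I * (σ : ℂ))) ^ n / Gamma ((n : ℂ) + 3 / 2))) := by
  set s : ℂ := (σ : ℂ) * (n : ℂ) - (ν : ℂ) - 1 / 2
  have hrefl := one_div_Gamma_one_sub hreg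
  rw [mul_div_assoc, sin_pi_mul_div_pi_eq_exp_sub_exp] at hrefl
  have hplus := exp_mul_mul_exp_pow ((π : ℂ) * I * (-(ν : ℂ) - 3 / 2)) ((π : ℂ) * I * σ) ζ n
  have hminus := exp_mul_mul_exp_pow (-(π : ℂ) * I * (-(ν : ℂ) - 3 / 2)) (-(π : ℂ) * I * σ) ζ n
  rw [show -(σ : ℂ) * (n : ℂ) + (ν : ℂ) + 3 / 2 = 1 - s by ring]
  rw [show (π : ℂ) * I * (-(ν : ℂ) - 3 / 2) + n * ((π : ℂ) * I * σ) = π * I * (s - 1) by ring]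
    at hplus
  rw [show -(π : ℂ) * I * (-(ν : ℂ) - 3 / 2) + n * (-(π : ℂ) * I * σ) = -π * I * (s - 1) by ring]
    at hminus
  linear_combination (ζ ^ n / Gamma ((n : ℂ) + 3 / 2)) * hrefl
    - (I / (2 * (π : ℂ)) * Gamma s / Gamma ((n : ℂ) + 3 / 2)) * (hplus - hminus)

/-- Reflection-formula decomposition of the generalised Struve series with
`a = −σ`, `0 < σ < 1`: with `ϑ = −ν − 3/2`,
`Σ_n ζⁿ/(Γ(n+3/2)Γ(−σn+ν+3/2))
  = (i/2π)[e^{iπϑ} Ψ(ζe^{iπσ}) − e^{−iπϑ} Ψ(ζe^{−iπσ})]`. -/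
theorem struveL_neg_sigma_psi_decomposition (σ ν : ℝ) (hσ0 : 0 < σ)
    (hσ1 : σ < 1)
    (hreg : ∀ n m : ℕ, σ * (n : ℝ) - ν - 1 / 2 ≠ -(m : ℝ)) (ζ : ℂ) :
    (∑' n : ℕ, ζ ^ n /
        (Complex.Gamma ((n : ℂ) + 3 / 2) *
          Complex.Gamma (-(σ : ℂ) * (n : ℂ) + (ν : ℂ) + 3 / 2)))
      = Complex.I / (2 * (Real.pi : ℂ)) *
        (Complex.exp ((Real.pi : ℂ) * Complex.I * (-(ν : ℂ) - 3 / 2)) *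
            wrightPsi21 σ ν (ζ * Complex.exp ((Real.pi : ℂ) * Complex.I * (σ : ℂ))) -
          Complex.exp (-(Real.pi : ℂ) * Complex.I * (-(ν : ℂ) - 3 / 2)) *
            wrightPsi21 σ ν (ζ * Complex.exp (-(Real.pi : ℂ) * Complex.I * (σ : ℂ)))) := by
  have hplus := summable_wrightPsi21 hσ0 hσ1 ν (ζ * Complex.exp (Real.pi * Complex.I * σ))
  have hminus := summable_wrightPsi21 hσ0 hσ1 ν (ζ * Complex.exp (-Real.pi * Complex.I * σ))
  rw [wrightPsi21, wrightPsi21, ← tsum_mul_left, ← tsum_mul_left,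
    ← (hplus.mul_left _).tsum_sub (hminus.mul_left _), ← tsum_mul_left]
  refine tsum_congr fun n => struve_term_eq_sub_wrightPsi21_terms σ ν n ζ fun m h => hreg n m ?_
  exact Complex.ofReal_injective (by push_cast; exact h)
end
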